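/- arXiv:math/0604202 — 7 statements merged into one kernel-verified Lean document; each statement's English description precedes it below -/
import Mathlib

section
/- Let λ : S → T be a length function on a poset S and λ* : S → Ch(T) the induced chain length function, λ*(x) = max{λ(X) | X a finite chain in S with max X = x}. Then, computed in the lexicographic order on Ch(T), λ*(x) = max( {λ*(x') ∪ {λ(x)} | x' < x} ∪ {{λ(x)}} ), i.e. λ*(x) is the maximum over all x' < x of λ*(x') ∪ {λ(x)} together with the singleton {λ(x)}. -/
/-- The lexicographic order on finite chains in a poset:
`X ≤ Y` iff `min (Y \ X) ≤ min (X \ Y)`, with the convention `max ∅ < x < min ∅`. -/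
def lexLE {T : Type*} [PartialOrder T] [DecidableEq T] (X Y : Finset T) : Prop :=
  X \ Y = ∅ ∨ ∃ b ∈ Y \ X, ∀ a ∈ X \ Y, b ≤ a

def lexLT {T : Type*} [PartialOrder T] [DecidableEq T] (X Y : Finset T) : Prop :=
  lexLE X Y ∧ ¬ lexLE Y X

/-- A length function on a poset `S`: a map `l : S → T` into a poset `T` with
(L1) strict monotonicity, (L2) comparability of all values,
(L3) `{l x' | x' ≤ x}` finite for each `x`. -/
def IsLengthFunction {S T : Type*} [PartialOrder S] [PartialOrder T] (l : S → T) : Prop :=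
  (∀ x y : S, x < y → l x < l y) ∧
  (∀ x y : S, l x ≤ l y ∨ l y ≤ l x) ∧
  (∀ x : S, {t : T | ∃ x' ≤ x, l x' = t}.Finite)

/-- `lstar` is the chain length function induced by `l`:
`lstar x = max {l(X) | X a finite chain in S with max X = x}`, the maximum taken in
the lexicographic order on finite chains in `T`. -/
def IsChainLengthFunction {S T : Type*} [PartialOrder S] [PartialOrder T] [DecidableEq T]
    (l : S → T) (lstar : S → Finset T) : Prop :=
  ∀ x : S,
    (∃ X : Finset S, IsChain (· ≤ ·) (X : Set S) ∧ x ∈ X ∧ (∀ a ∈ X, a ≤ x) ∧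
      lstar x = X.image l) ∧
    (∀ X : Finset S, IsChain (· ≤ ·) (X : Set S) → x ∈ X → (∀ a ∈ X, a ≤ x) →
      lexLE (X.image l) (lstar x))


theorem lexLE_antisymm {T : Type*} [PartialOrder T] [DecidableEq T] {X Y : Finset T}
    (h1 : lexLE X Y) (h2 : lexLE Y X) : X = Y := by
  rcases h1 with h1 | ⟨b, hb, hbmin⟩
  · rcases h2 with h2 | ⟨a, ha, hamin⟩
    · exact le_antisymm (Finset.sdiff_eq_empty_iff_subset.mp h1)
        (Finset.sdiff_eq_empty_iff_subset.mp h2)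
    · rw [h1] at ha; simp at ha
  · rcases h2 with h2 | ⟨a, ha, hamin⟩
    · rw [h2] at hb; simp at hb
    · have hba : b = a := le_antisymm (hbmin a ha) (hamin b hb)
      subst hba
      simp only [Finset.mem_sdiff] at ha hb
      exact absurd ha.1 hb.2

theorem lexLE_insert {T : Type*} [PartialOrder T] [DecidableEq T] {A B : Finset T} {t : T}
    (ht : ∀ b ∈ B, b ≠ t) (h : lexLE A B) : lexLE (insert t A) (insert t B) := by
  rcases h with h | ⟨b, hb, hbmin⟩
  · left
    rw [Finset.eq_empty_iff_forall_notMem] at h ⊢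
    intro a ha
    simp only [Finset.mem_sdiff, Finset.mem_insert, not_or] at ha
    rcases ha.1 with rfl | haA
    · exact ha.2.1 rfl
    · exact h a (Finset.mem_sdiff.mpr ⟨haA, ha.2.2⟩)
  · right
    simp only [Finset.mem_sdiff] at hb
    refine ⟨b, ?_, ?_⟩
    · simp only [Finset.mem_sdiff, Finset.mem_insert, not_or]
      exact ⟨Or.inr hb.1, ht b hb.1, hb.2⟩
    · intro a ha
      simp only [Finset.mem_sdiff, Finset.mem_insert, not_or] at ha
      rcases ha.1 with rfl | haA
      · exact absurd rfl ha.2.1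
      · exact hbmin a (Finset.mem_sdiff.mpr ⟨haA, ha.2.2⟩)

/-- (C0): `λ*(x)` is the maximum, in the lexicographic order, of the set consisting of
`λ*(x') ∪ {λ(x)}` for all `x' < x` together with the singleton `{λ(x)}`. -/
theorem chainLengthFunction_rec {S T : Type*} [PartialOrder S] [PartialOrder T] [DecidableEq T]
    (l : S → T) (lstar : S → Finset T)
    (hl : IsLengthFunction l) (hs : IsChainLengthFunction l lstar) :
    ∀ x : S,
      (lstar x = {l x} ∨ ∃ x' < x, lstar x = insert (l x) (lstar x')) ∧
      lexLE {l x} (lstar x) ∧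
      (∀ x' < x, lexLE (insert (l x) (lstar x')) (lstar x))  := by
  classical
  obtain ⟨hmono, hcomp, hfin⟩ := hl
  intro x
  obtain ⟨⟨X, hXchain, hxX, hXle, hXeq⟩, hXmax⟩ := hs x
  -- part 2
  have h2 : lexLE {l x} (lstar x) := by
    have hch : IsChain (· ≤ ·) (({x} : Finset S) : Set S) := by
      simp only [Finset.coe_singleton]
      exact Set.subsingleton_singleton.isChain
    have := hXmax {x} hch (Finset.mem_singleton_self x)
      (by intro a ha; simp at ha; simp [ha])
    simpa using this
  -- part 3
  have h3 : ∀ x' < x, lexLE (insert (l x) (lstar x')) (lstar x) := by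
    intro x' hx'
    obtain ⟨⟨Y, hYchain, hx'Y, hYle, hYeq⟩, _⟩ := hs x'
    have hZchain : IsChain (· ≤ ·) ((insert x Y : Finset S) : Set S) := by
      rw [Finset.coe_insert]
      exact hYchain.insert (fun b hb _ => Or.inr (le_trans (hYle b hb) hx'.le))
    have hZmem : x ∈ insert x Y := Finset.mem_insert_self x Y
    have hZle : ∀ a ∈ insert x Y, a ≤ x := by
      intro a ha
      rcases Finset.mem_insert.mp ha with rfl | ha
      · exact le_refl a
      · exact le_trans (hYle a ha) hx'.le
    have := hXmax (insert x Y) hZchain hZmem hZle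
    rwa [Finset.image_insert, ← hYeq] at this
  refine ⟨?_, h2, h3⟩
  -- part 1
  by_cases hE : X.erase x = ∅
  · left
    have : X = {x} := by
      apply Finset.eq_singleton_iff_unique_mem.mpr
      refine ⟨hxX, fun a ha => ?_⟩
      by_contra hne
      exact (Finset.eq_empty_iff_forall_notMem.mp hE a) (Finset.mem_erase.mpr ⟨hne, ha⟩)
    rw [hXeq, this, Finset.image_singleton]
  · right
    obtain ⟨x', hx'mem, hx'max⟩ : ∃ m ∈ X.erase x, ∀ a ∈ X.erase x, ¬ m < a := by
      obtain ⟨m, hm⟩ := Finset.exists_maximal (Finset.nonempty_iff_ne_empty.mpr hE)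
      exact ⟨m, hm.1, fun a ha hlt => lt_irrefl m (lt_of_lt_of_le hlt (hm.2 ha hlt.le))⟩
    have hx'ne : x' ≠ x := (Finset.mem_erase.mp hx'mem).1
    have hx'X : x' ∈ X := (Finset.mem_erase.mp hx'mem).2
    have hx'lt : x' < x := lt_of_le_of_ne (hXle x' hx'X) hx'ne
    refine ⟨x', hx'lt, ?_⟩
    obtain ⟨⟨Y, hYchain, hx'Y, hYle, hYeq⟩, hYmax⟩ := hs x'
    -- the erase is a chain with max x'
    have hEchain : IsChain (· ≤ ·) ((X.erase x : Finset S) : Set S) :=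
      hXchain.mono (by intro a ha; simp only [Finset.coe_erase, Set.mem_diff] at ha; exact ha.1)
    have hEle : ∀ a ∈ X.erase x, a ≤ x' := by
      intro a ha
      by_cases hax : a = x'
      · exact le_of_eq hax
      · rcases hEchain (Finset.mem_coe.mpr ha) (Finset.mem_coe.mpr hx'mem) hax with h | h
        · exact h
        · exact absurd (lt_of_le_of_ne h (Ne.symm hax)) (hx'max a ha)
    have hle1 : lexLE ((X.erase x).image l) (lstar x') := hYmax _ hEchain hx'mem hEle
    have ht : ∀ b ∈ lstar x', b ≠ l x := by
      intro b hb
      rw [hYeq] at hb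
      obtain ⟨a, haY, rfl⟩ := Finset.mem_image.mp hb
      exact ne_of_lt (hmono a x (lt_of_le_of_lt (hYle a haY) hx'lt))
    have hle2 : lexLE (lstar x) (insert (l x) (lstar x')) := by
      have := lexLE_insert ht hle1
      rwa [← Finset.image_insert, Finset.insert_erase hxX, ← hXeq] at this
    exact lexLE_antisymm hle2 (h3 x' hx'lt)
end

section
/- Let λ : S → T be a length function on a poset S and λ* the induced chain length function. For x, y ∈ S: if x ≤ y then λ*(x) ≤ λ*(y) in the lexicographic order on Ch(T). -/
/-! If `X` is a chain topped by `x` with `λ*(x) = λ(X)`, then `X ∪ {y}` is a chain topped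
by `y`, so `λ(X ∪ {y}) ≤ λ*(y)`. Enlarging the left side of a lexicographic comparison only makes it
easier, since `A ⊆ B` gives `A \ C ⊆ B \ C` and `C \ B ⊆ C \ A`. -/

theorem lexLE.of_subset_left {T : Type*} [PartialOrder T] [DecidableEq T] {A B C : Finset T}
    (hAB : A ⊆ B) (h : lexLE B C) : lexLE A C := by
  rcases h with hBC | ⟨b, hb, hb_le⟩
  · exact Or.inl (Finset.sdiff_eq_empty_iff_subset.mpr
      (hAB.trans (Finset.sdiff_eq_empty_iff_subset.mp hBC)))
  · exact Or.inr ⟨b, Finset.sdiff_subset_sdiff le_rfl hAB hb,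
      fun a ha => hb_le a (Finset.sdiff_subset_sdiff hAB le_rfl ha)⟩

theorem IsChain.insert_of_forall_le {S : Type*} [PartialOrder S] {X : Set S} {y : S}
    (hX : IsChain (· ≤ ·) X) (hy : ∀ a ∈ X, a ≤ y) : IsChain (· ≤ ·) (insert y X) :=
  hX.insert fun a ha _ => Or.inr (hy a ha)

theorem chainLengthFunction_monotone_general {S T : Type*} [PartialOrder S] [PartialOrder T]
    [DecidableEq T] (l : S → T) (lstar : S → Finset T)
    (hs : IsChainLengthFunction l lstar) :
    ∀ x y : S, x ≤ y → lexLE (lstar x) (lstar y) := by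
  classical
  intro x y hxy
  obtain ⟨X, hX, -, hX_le, hx_eq⟩ := (hs x).1
  have hXy_le : ∀ a ∈ insert y X, a ≤ y := by
    simpa only [Finset.forall_mem_insert] using ⟨le_rfl, fun a ha => (hX_le a ha).trans hxy⟩
  have hXy : IsChain (· ≤ ·) ((insert y X : Finset S) : Set S) := by
    rw [Finset.coe_insert]
    exact hX.insert_of_forall_le fun a ha => (hX_le a ha).trans hxy
  have h_le : lexLE ((insert y X).image l) (lstar y) :=
    (hs y).2 _ hXy (Finset.mem_insert_self y X) hXy_le
  rw [hx_eq]
  exact h_le.of_subset_left (Finset.image_subset_image (Finset.subset_insert y X))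

/-- (C1): `x ≤ y` implies `λ*(x) ≤ λ*(y)` in the lexicographic order. -/
theorem chainLengthFunction_monotone {S T : Type*} [PartialOrder S] [PartialOrder T]
    [DecidableEq T] (l : S → T) (lstar : S → Finset T)
    (hl : IsLengthFunction l) (hs : IsChainLengthFunction l lstar) :
    ∀ x y : S, x ≤ y → lexLE (lstar x) (lstar y) :=
  chainLengthFunction_monotone_general l lstar hs
end

section
/- Let λ : S → T be a length function on a poset S and λ* the induced chain length function. For x, y ∈ S: if λ*(x') < λ*(y) for all x' < x, and λ(x) ≥ λ(y), then λ*(x) ≤ λ*(y). -/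
lemma exists_min_of_comp {T : Type*} [PartialOrder T]
    (s : Finset T) (hne : s.Nonempty) (hc : ∀ a ∈ s, ∀ b ∈ s, a ≤ b ∨ b ≤ a) :
    ∃ m ∈ s, ∀ a ∈ s, m ≤ a := by
  obtain ⟨m, hm, hmin⟩ := s.exists_minimal hne
  refine ⟨m, hm, fun a ha => ?_⟩
  rcases hc m hm a ha with h | h
  · exact h
  · exact hmin ha h

lemma exists_max_of_chain {S : Type*} [PartialOrder S]
    (s : Finset S) (hne : s.Nonempty) (hc : IsChain (· ≤ ·) (s : Set S)) :
    ∃ m ∈ s, ∀ a ∈ s, a ≤ m := by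
  obtain ⟨m, hm, hmax⟩ := s.exists_maximal hne
  refine ⟨m, hm, fun a ha => ?_⟩
  rcases eq_or_ne a m with rfl | hne'
  · exact le_rfl
  rcases hc (by exact_mod_cast ha) (by exact_mod_cast hm) hne' with h | h
  · exact h
  · exact hmax ha h

lemma lex_trans_aux {T : Type*} [PartialOrder T] [DecidableEq T]
    (A C B : Finset T)
    (hcomp : ∀ a ∈ A ∪ C ∪ B, ∀ b ∈ A ∪ C ∪ B, a ≤ b ∨ b ≤ a)
    (h1 : lexLE A C) (h2 : lexLE C B) (hAB : A \ B ≠ ∅) :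
    ∃ b ∈ B \ A, ∀ a ∈ A \ B, b ≤ a := by
  set D : Finset T := (A \ B) ∪ (B \ A) ∪ (A \ C) ∪ (C \ A) ∪ (B \ C) ∪ (C \ B) with hD
  have hDsub : D ⊆ A ∪ C ∪ B := by
    intro a ha
    simp only [hD, Finset.mem_union, Finset.mem_sdiff] at ha
    simp only [Finset.mem_union]
    tauto
  have hDne : D.Nonempty := by
    obtain ⟨a, ha⟩ := Finset.nonempty_iff_ne_empty.2 hAB
    exact ⟨a, by simp [hD, Finset.mem_sdiff.1 ha]⟩
  obtain ⟨m, hmD, hmin⟩ := exists_min_of_comp D hDne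
    (fun a ha b hb => hcomp a (hDsub ha) b (hDsub hb))
  by_cases hA : m ∈ A <;> by_cases hB : m ∈ B <;> by_cases hC : m ∈ C
  -- (T,T,T): m in no diff, contradiction with m ∈ D
  · exfalso
    simp only [hD, Finset.mem_union, Finset.mem_sdiff] at hmD
    tauto
  -- (T,T,F): m ∈ A \ C, use h1
  · exfalso
    rcases h1 with h | ⟨c, hc, hcle⟩
    · exact hC ((Finset.sdiff_eq_empty_iff_subset.1 h) hA)
    · have hcm : c ≤ m := hcle m (Finset.mem_sdiff.2 ⟨hA, hC⟩)
      have hmc : m ≤ c := hmin c (by simp [hD, Finset.mem_sdiff.1 hc])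
      have : c = m := le_antisymm hcm hmc
      exact (Finset.mem_sdiff.1 hc).2 (this ▸ hA)
  -- (T,F,T): m ∈ C \ B, use h2
  · exfalso
    rcases h2 with h | ⟨b, hb, hble⟩
    · exact hB ((Finset.sdiff_eq_empty_iff_subset.1 h) hC)
    · have hbm : b ≤ m := hble m (Finset.mem_sdiff.2 ⟨hC, hB⟩)
      have hmb : m ≤ b := hmin b (by simp [hD, Finset.mem_sdiff.1 hb])
      have : b = m := le_antisymm hbm hmb
      exact hB (this ▸ (Finset.mem_sdiff.1 hb).1)
  -- (T,F,F): m ∈ A \ C, use h1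
  · exfalso
    rcases h1 with h | ⟨c, hc, hcle⟩
    · exact hC ((Finset.sdiff_eq_empty_iff_subset.1 h) hA)
    · have hcm : c ≤ m := hcle m (Finset.mem_sdiff.2 ⟨hA, hC⟩)
      have hmc : m ≤ c := hmin c (by simp [hD, Finset.mem_sdiff.1 hc])
      have : c = m := le_antisymm hcm hmc
      exact (Finset.mem_sdiff.1 hc).2 (this ▸ hA)
  -- (F,T,T): m ∈ B \ A, goal
  · exact ⟨m, Finset.mem_sdiff.2 ⟨hB, hA⟩,
      fun a ha => hmin a (by simp [hD, Finset.mem_sdiff.1 ha])⟩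
  -- (F,T,F): m ∈ B \ A, goal
  · exact ⟨m, Finset.mem_sdiff.2 ⟨hB, hA⟩,
      fun a ha => hmin a (by simp [hD, Finset.mem_sdiff.1 ha])⟩
  -- (F,F,T): m ∈ C \ B, use h2
  · exfalso
    rcases h2 with h | ⟨b, hb, hble⟩
    · exact hB ((Finset.sdiff_eq_empty_iff_subset.1 h) hC)
    · have hbm : b ≤ m := hble m (Finset.mem_sdiff.2 ⟨hC, hB⟩)
      have hmb : m ≤ b := hmin b (by simp [hD, Finset.mem_sdiff.1 hb])
      have : b = m := le_antisymm hbm hmb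
      exact hB (this ▸ (Finset.mem_sdiff.1 hb).1)
  -- (F,F,F): m in no diff
  · exfalso
    simp only [hD, Finset.mem_union, Finset.mem_sdiff] at hmD
    tauto

/-- (C3): if `λ*(x') < λ*(y)` for all `x' < x` and `λ(x) ≥ λ(y)`, then `λ*(x) ≤ λ*(y)`. -/
theorem chainLengthFunction_main {S T : Type*} [PartialOrder S] [PartialOrder T]
    [DecidableEq T] (l : S → T) (lstar : S → Finset T)
    (hl : IsLengthFunction l) (hs : IsChainLengthFunction l lstar) :
    ∀ x y : S, (∀ x' < x, lexLT (lstar x') (lstar y)) → l y ≤ l x →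
      lexLE (lstar x) (lstar y) := by
  classical
  intro x y hx' hyx
  obtain ⟨X, hXchain, hxX, hXle, hXeq⟩ := (hs x).1
  obtain ⟨Y, hYchain, hyY, hYle, hYeq⟩ := (hs y).1
  set t := l x with ht
  set A := (X.erase x).image l with hA
  set B := lstar y with hB
  have hXimg : X.image l = insert t A := by
    conv_lhs => rw [← Finset.insert_erase hxX]
    rw [Finset.image_insert]
  -- every element of B is ≤ t
  have hBle : ∀ b ∈ B, b ≤ t := by
    intro b hb
    rw [hYeq] at hb
    obtain ⟨a, ha, rfl⟩ := Finset.mem_image.1 hb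
    rcases (hYle a ha).lt_or_eq with h | rfl
    · exact (hl.1 a y h).le.trans hyx
    · exact hyx
  -- every element of A is < t
  have hAlt : ∀ a ∈ A, a < t := by
    intro a ha
    obtain ⟨b, hb, rfl⟩ := Finset.mem_image.1 ha
    exact hl.1 b x (lt_of_le_of_ne (hXle b (Finset.mem_of_mem_erase hb))
      (Finset.ne_of_mem_erase hb))
  have hlyB : l y ∈ B := by rw [hYeq]; exact Finset.mem_image_of_mem l hyY
  -- facts available when X.erase x is nonempty
  have haux : (X.erase x).Nonempty →
      ∃ x' : S, x' < x ∧ lexLE A (lstar x') ∧ lexLT (lstar x') B := by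
    intro hne
    have hchain' : IsChain (· ≤ ·) ((X.erase x : Finset S) : Set S) :=
      hXchain.mono (by exact_mod_cast X.erase_subset x)
    obtain ⟨x', hx'mem, hx'max⟩ := exists_max_of_chain (X.erase x) hne hchain'
    have hx'x : x' < x := lt_of_le_of_ne (hXle x' (Finset.mem_of_mem_erase hx'mem))
      (Finset.ne_of_mem_erase hx'mem)
    exact ⟨x', hx'x, (hs x').2 (X.erase x) hchain' hx'mem hx'max, hx' x' hx'x⟩
  rw [hXeq, hXimg]
  by_cases hAB : A \ B = ∅
  · by_cases htB : t ∈ B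
    · left
      rw [Finset.eq_empty_iff_forall_notMem]
      intro a ha
      obtain ⟨ha1, ha2⟩ := Finset.mem_sdiff.1 ha
      rcases Finset.mem_insert.1 ha1 with rfl | haA
      · exact ha2 htB
      · exact (Finset.eq_empty_iff_forall_notMem.1 hAB a) (Finset.mem_sdiff.2 ⟨haA, ha2⟩)
    · by_cases hBA : B \ A = ∅
      · -- then A = B, contradiction via the maximum of X.erase x
        exfalso
        have hABeq : A = B := Finset.Subset.antisymm
          (Finset.sdiff_eq_empty_iff_subset.1 hAB) (Finset.sdiff_eq_empty_iff_subset.1 hBA)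
        have hAne : A.Nonempty := ⟨l y, hABeq ▸ hlyB⟩
        obtain ⟨x', _, hle1, hlt⟩ := haux (Finset.image_nonempty.1 (hA ▸ hAne))
        exact hlt.2 (hABeq ▸ hle1)
      · -- pick any b ∈ B \ A
        obtain ⟨b, hb⟩ := Finset.nonempty_iff_ne_empty.2 hBA
        obtain ⟨hb1, hb2⟩ := Finset.mem_sdiff.1 hb
        have hbt : b ≠ t := fun h => htB (h ▸ hb1)
        right
        refine ⟨b, Finset.mem_sdiff.2 ⟨hb1, fun h => ?_⟩, fun a ha => ?_⟩
        · rcases Finset.mem_insert.1 h with h | h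
          · exact hbt h
          · exact hb2 h
        · obtain ⟨ha1, ha2⟩ := Finset.mem_sdiff.1 ha
          rcases Finset.mem_insert.1 ha1 with rfl | haA
          · exact hBle b hb1
          · exact absurd (Finset.mem_sdiff.2 ⟨haA, ha2⟩)
              (Finset.eq_empty_iff_forall_notMem.1 hAB a)
  · -- A \ B nonempty: use transitivity through lstar x'
    obtain ⟨a0, ha0⟩ := Finset.nonempty_iff_ne_empty.2 hAB
    obtain ⟨ha01, ha02⟩ := Finset.mem_sdiff.1 ha0
    have hAne : A.Nonempty := ⟨a0, ha01⟩
    obtain ⟨x', _, hle1, hlt⟩ := haux (Finset.image_nonempty.1 (hA ▸ hAne))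
    have hcomp : ∀ a ∈ A ∪ lstar x' ∪ B, ∀ b ∈ A ∪ lstar x' ∪ B, a ≤ b ∨ b ≤ a := by
      obtain ⟨X'', _, _, _, hX''eq⟩ := (hs x').1
      have hmem : ∀ a ∈ A ∪ lstar x' ∪ B, ∃ s : S, l s = a := by
        intro a ha
        rcases Finset.mem_union.1 ha with ha | ha
        · rcases Finset.mem_union.1 ha with ha | ha
          · obtain ⟨s, _, rfl⟩ := Finset.mem_image.1 ha; exact ⟨s, rfl⟩
          · rw [hX''eq] at ha
            obtain ⟨s, _, rfl⟩ := Finset.mem_image.1 ha; exact ⟨s, rfl⟩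
        · rw [hYeq] at ha
          obtain ⟨s, _, rfl⟩ := Finset.mem_image.1 ha; exact ⟨s, rfl⟩
      intro a ha b hb
      obtain ⟨s1, rfl⟩ := hmem a ha
      obtain ⟨s2, rfl⟩ := hmem b hb
      exact hl.2.1 s1 s2
    obtain ⟨b, hb, hble⟩ := lex_trans_aux A (lstar x') B hcomp hle1 hlt.1 hAB
    obtain ⟨hb1, hb2⟩ := Finset.mem_sdiff.1 hb
    have hbt : b ≠ t := by
      intro h
      exact absurd (lt_of_le_of_lt (h ▸ hble a0 ha0) (hAlt a0 ha01)) (lt_irrefl t)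
    right
    refine ⟨b, Finset.mem_sdiff.2 ⟨hb1, fun h => ?_⟩, fun a ha => ?_⟩
    · rcases Finset.mem_insert.1 h with h | h
      · exact hbt h
      · exact hb2 h
    · obtain ⟨ha1, ha2⟩ := Finset.mem_sdiff.1 ha
      rcases Finset.mem_insert.1 ha1 with rfl | haA
      · exact hBle b hb1
      · exact hble a (Finset.mem_sdiff.2 ⟨haA, ha2⟩)
end

section
/- If λ : S → T is a length function on a poset S, then the induced chain length function λ* : S → Ch(T) is itself a length function: (L1) x < y implies λ*(x) < λ*(y); (L2) λ*(x) and λ*(y) are comparable for all x, y; (L3) {λ*(x') | x' ≤ x} is finite for each x. -/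
/-- Transitivity of `lexLE`, assuming comparability of the relevant elements. -/
lemma lexLE_trans {T : Type*} [PartialOrder T] [DecidableEq T] {X Y Z : Finset T}
    (hcomp : ∀ b ∈ Y, ∀ c ∈ Z, b ≤ c ∨ c ≤ b)
    (h1 : lexLE X Y) (h2 : lexLE Y Z) : lexLE X Z := by
  rcases h1 with h1 | ⟨b, hb, hbmin⟩
  · have hXY : X ⊆ Y := Finset.sdiff_eq_empty_iff_subset.mp h1
    rcases h2 with h2 | ⟨c, hc, hcmin⟩
    · exact Or.inl (Finset.sdiff_eq_empty_iff_subset.mpr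
        (hXY.trans (Finset.sdiff_eq_empty_iff_subset.mp h2)))
    · rw [Finset.mem_sdiff] at hc
      by_cases hXZ : X \ Z = ∅
      · exact Or.inl hXZ
      · refine Or.inr ⟨c, Finset.mem_sdiff.mpr ⟨hc.1, fun hcX => hc.2 (hXY hcX)⟩, ?_⟩
        intro a ha
        rw [Finset.mem_sdiff] at ha
        exact hcmin a (Finset.mem_sdiff.mpr ⟨hXY ha.1, ha.2⟩)
  · rw [Finset.mem_sdiff] at hb
    rcases h2 with h2 | ⟨c, hc, hcmin⟩
    · have hYZ : Y ⊆ Z := Finset.sdiff_eq_empty_iff_subset.mp h2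
      refine Or.inr ⟨b, Finset.mem_sdiff.mpr ⟨hYZ hb.1, hb.2⟩, ?_⟩
      intro a ha
      rw [Finset.mem_sdiff] at ha
      refine hbmin a (Finset.mem_sdiff.mpr ⟨ha.1, fun haY => ha.2 (hYZ haY)⟩)
    · rw [Finset.mem_sdiff] at hc
      rcases hcomp b hb.1 c hc.1 with hbc | hcb
      · -- use b; show b ∈ Z
        have hbZ : b ∈ Z := by
          by_contra hbZ
          have : c ≤ b := hcmin b (Finset.mem_sdiff.mpr ⟨hb.1, hbZ⟩)
          exact hc.2 (le_antisymm hbc this ▸ hb.1)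
        refine Or.inr ⟨b, Finset.mem_sdiff.mpr ⟨hbZ, hb.2⟩, ?_⟩
        intro a ha
        rw [Finset.mem_sdiff] at ha
        by_cases haY : a ∈ Y
        · exact hbc.trans (hcmin a (Finset.mem_sdiff.mpr ⟨haY, ha.2⟩))
        · exact hbmin a (Finset.mem_sdiff.mpr ⟨ha.1, haY⟩)
      · -- use c; show c ∉ X
        have hcX : c ∉ X := by
          intro hcX
          have : b ≤ c := hbmin c (Finset.mem_sdiff.mpr ⟨hcX, hc.2⟩)
          exact hc.2 (le_antisymm hcb this ▸ hb.1)
        refine Or.inr ⟨c, Finset.mem_sdiff.mpr ⟨hc.1, hcX⟩, ?_⟩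
        intro a ha
        rw [Finset.mem_sdiff] at ha
        by_cases haY : a ∈ Y
        · exact hcmin a (Finset.mem_sdiff.mpr ⟨haY, ha.2⟩)
        · exact hcb.trans (hbmin a (Finset.mem_sdiff.mpr ⟨ha.1, haY⟩))

/-- A nonempty finset of pairwise comparable elements has a minimum. -/
lemma exists_finset_min {T : Type*} [PartialOrder T] {s : Finset T} (hne : s.Nonempty)
    (hcomp : ∀ a ∈ s, ∀ b ∈ s, a ≤ b ∨ b ≤ a) : ∃ m ∈ s, ∀ a ∈ s, m ≤ a := by
  obtain ⟨m, hm, hmin⟩ := s.exists_minimal hne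
  refine ⟨m, hm, fun a ha => ?_⟩
  rcases hcomp a ha m hm with h | h
  · rcases lt_or_eq_of_le h with h' | h'
    · exact absurd h' (fun h'' => lt_irrefl a (lt_of_lt_of_le h'' (hmin ha h'.le)))
    · exact h'.ge
  · exact h

/-- The chain length function `λ*` induced by a length function `λ` is itself a length
function: (L1) strictly monotone, (L2) all values comparable, (L3) locally finitely
many values. -/
theorem chainLengthFunction_isLengthFunction {S T : Type*} [PartialOrder S] [PartialOrder T]
    [DecidableEq T] (l : S → T) (lstar : S → Finset T)
    (hl : IsLengthFunction l) (hs : IsChainLengthFunction l lstar) :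
    (∀ x y : S, x < y → lexLT (lstar x) (lstar y)) ∧
    (∀ x y : S, lexLE (lstar x) (lstar y) ∨ lexLE (lstar y) (lstar x)) ∧
    (∀ x : S, {A : Finset T | ∃ x' ≤ x, lstar x' = A}.Finite) := by
  classical
  -- every element of `lstar z` is a value of `l`
  have hrange : ∀ z : S, ∀ t ∈ lstar z, ∃ a : S, l a = t := by
    intro z t ht
    obtain ⟨X, _, _, _, hX⟩ := (hs z).1
    rw [hX] at ht
    obtain ⟨a, _, ha⟩ := Finset.mem_image.mp ht
    exact ⟨a, ha⟩
  have hcmp : ∀ t u : T, (∃ a, l a = t) → (∃ a, l a = u) → t ≤ u ∨ u ≤ t := by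
    rintro t u ⟨a, rfl⟩ ⟨b, rfl⟩
    exact hl.2.1 a b
  refine ⟨?_, ?_, ?_⟩
  · -- (L1)
    intro x y hxy
    obtain ⟨X, hXchain, hxX, hXle, hXimg⟩ := (hs x).1
    -- `insert y X` is a chain witnessing a chain with max `y`
    have hXlty : ∀ a ∈ X, a < y := fun a ha => lt_of_le_of_lt (hXle a ha) hxy
    have hchain' : IsChain (· ≤ ·) ((insert y X : Finset S) : Set S) := by
      rw [Finset.coe_insert]
      exact hXchain.insert (fun b hb _ => Or.inr (hXlty b hb).le)
    have himg : (insert y X).image l = insert (l y) (lstar x) := by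
      rw [Finset.image_insert, hXimg]
    have hCB : lexLE (insert (l y) (lstar x)) (lstar y) := by
      rw [← himg]
      exact (hs y).2 (insert y X) hchain' (Finset.mem_insert_self y X)
        (fun a ha => by
          rcases Finset.mem_insert.mp ha with h | h
          · exact h ▸ le_refl y
          · exact (hXlty a h).le)
    have hly_notin : l y ∉ lstar x := by
      intro h
      rw [hXimg] at h
      obtain ⟨a, haX, hal⟩ := Finset.mem_image.mp h
      exact absurd (hal ▸ hl.1 a y (hXlty a haX)) (lt_irrefl _)
    have hAC : lexLE (lstar x) (insert (l y) (lstar x)) :=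
      Or.inl (Finset.sdiff_eq_empty_iff_subset.mpr (Finset.subset_insert _ _))
    have hnCA : ¬ lexLE (insert (l y) (lstar x)) (lstar x) := by
      rintro (h | ⟨b, hb, -⟩)
      · have : l y ∈ insert (l y) (lstar x) \ lstar x :=
          Finset.mem_sdiff.mpr ⟨Finset.mem_insert_self _ _, hly_notin⟩
        rw [h] at this
        exact absurd this (Finset.notMem_empty _)
      · rw [Finset.mem_sdiff] at hb
        exact hb.2 (Finset.mem_insert_of_mem hb.1)
    -- comparability hypotheses for transitivity
    have hC : ∀ t ∈ insert (l y) (lstar x), ∃ a, l a = t := by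
      intro t ht
      rcases Finset.mem_insert.mp ht with h | h
      · exact ⟨y, h.symm⟩
      · exact hrange x t h
    have hcompCB : ∀ b ∈ insert (l y) (lstar x), ∀ c ∈ lstar y, b ≤ c ∨ c ≤ b :=
      fun b hb c hc => hcmp b c (hC b hb) (hrange y c hc)
    constructor
    · exact lexLE_trans hcompCB hAC hCB
    · intro hBA
      have hcompBA : ∀ b ∈ lstar y, ∀ c ∈ lstar x, b ≤ c ∨ c ≤ b :=
        fun b hb c hc => hcmp b c (hrange y b hb) (hrange x c hc)
      exact hnCA (lexLE_trans hcompBA hCB hBA)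
  · -- (L2)
    intro x y
    by_cases hAB : lstar x \ lstar y = ∅
    · exact Or.inl (Or.inl hAB)
    by_cases hBA : lstar y \ lstar x = ∅
    · exact Or.inr (Or.inl hBA)
    set D := (lstar x \ lstar y) ∪ (lstar y \ lstar x) with hD
    have hDne : D.Nonempty := by
      obtain ⟨a, ha⟩ := Finset.nonempty_iff_ne_empty.mpr hAB
      exact ⟨a, Finset.mem_union_left _ ha⟩
    have hDrange : ∀ t ∈ D, ∃ a, l a = t := by
      intro t ht
      rcases Finset.mem_union.mp ht with h | h
      · exact hrange x t (Finset.mem_sdiff.mp h).1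
      · exact hrange y t (Finset.mem_sdiff.mp h).1
    obtain ⟨m, hm, hmin⟩ := exists_finset_min hDne
      (fun a ha b hb => hcmp a b (hDrange a ha) (hDrange b hb))
    rcases Finset.mem_union.mp hm with h | h
    · exact Or.inr (Or.inr ⟨m, h, fun a ha => hmin a (Finset.mem_union_right _ ha)⟩)
    · exact Or.inl (Or.inr ⟨m, h, fun a ha => hmin a (Finset.mem_union_left _ ha)⟩)
  · -- (L3)
    intro x
    have hV : {t : T | ∃ x' ≤ x, l x' = t}.Finite := hl.2.2 x
    refine Set.Finite.subset (Finset.finite_toSet hV.toFinset.powerset) ?_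
    rintro A ⟨x', hx', rfl⟩
    simp only [Finset.coe_powerset, Set.mem_preimage, Set.mem_powerset_iff,
      Finset.mem_coe, Finset.mem_powerset]
    intro t ht
    obtain ⟨X, _, _, hXle, hXimg⟩ := (hs x').1
    rw [hXimg] at ht
    obtain ⟨a, haX, ha⟩ := Finset.mem_image.mp ht
    exact hV.mem_toFinset.mpr ⟨a, (hXle a haX).trans hx', ha⟩
end

section
/- Let S be a poset such that for every x ∈ S the set {x' ∈ S | x' ≤ x} is a finite chain. Then λ : S → ℕ defined by λ(x) = card{x' ∈ S | x' ≤ x} is a length function, and the induced chain length function λ* is equivalent to λ, i.e., λ(x) ≤ λ(y) iff λ*(x) ≤ λ*(y) for all x, y ∈ S. -/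
/-!
Since `{x' | x' ≤ x}` is a finite chain, `λ` is strictly monotone on it and maps it into
`{1, …, λ x}`; counting shows that it maps it onto `{1, …, λ x}`. Every chain with maximum `x`
has its `λ`-values in `{1, …, λ x}` as well, and the lexicographic maximality of `λ* x` then
forces `λ* x = {1, …, λ x}`. Finally, on initial segments `{1, …, m}` of `ℕ` the
lexicographic order is just `m ≤ n`.
-/

theorem lexLE_Icc_one_iff (m n : ℕ) : lexLE (Finset.Icc 1 m) (Finset.Icc 1 n) ↔ m ≤ n := by
  constructor
  · rintro (hsub | ⟨b, hb, -⟩)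
    · rcases Nat.eq_zero_or_pos m with rfl | hm
      · exact Nat.zero_le n
      · have hmn := Finset.sdiff_eq_empty_iff_subset.mp hsub (Finset.mem_Icc.mpr ⟨hm, le_rfl⟩)
        exact (Finset.mem_Icc.mp hmn).2
    · simp only [Finset.mem_sdiff, Finset.mem_Icc, not_and, not_le] at hb
      exact (hb.2 hb.1.1).le.trans hb.1.2
  · intro hmn
    exact Or.inl (Finset.sdiff_eq_empty_iff_subset.mpr (Finset.Icc_subset_Icc_right hmn))

theorem eq_of_subset_of_lexLE {T : Type*} [PartialOrder T] [DecidableEq T] {X Y : Finset T}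
    (hYX : Y ⊆ X) (hXY : lexLE X Y) : Y = X := by
  rcases hXY with hsub | ⟨b, hb, -⟩
  · exact hYX.antisymm (Finset.sdiff_eq_empty_iff_subset.mp hsub)
  · exact absurd (hYX (Finset.mem_sdiff.mp hb).1) (Finset.mem_sdiff.mp hb).2

section

variable {S : Type*} [PartialOrder S] {x y : S}

theorem card_Iic_lt_card_Iic (hy : (Set.Iic y).Finite) (hxy : x < y) :
    Nat.card (Set.Iic x) < Nat.card (Set.Iic y) := by
  simpa only [Nat.card_coe_set_eq] using Set.ncard_lt_ncard (Set.Iic_ssubset_Iic.mpr hxy) hy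

theorem card_Iic_mem_Icc (hx : (Set.Iic x).Finite) {a : S} (hax : a ≤ x) :
    Nat.card (Set.Iic a) ∈ Finset.Icc 1 (Nat.card (Set.Iic x)) := by
  simp only [Nat.card_coe_set_eq, Finset.mem_Icc]
  exact ⟨(Set.ncard_pos (hx.subset (Set.Iic_subset_Iic.mpr hax))).mpr ⟨a, le_rfl⟩,
    Set.ncard_le_ncard (Set.Iic_subset_Iic.mpr hax) hx⟩

theorem image_card_Iic_eq_Icc (hx : (Set.Iic x).Finite) (hchain : IsChain (· ≤ ·) (Set.Iic x)) :
    hx.toFinset.image (fun a => Nat.card (Set.Iic a)) = Finset.Icc 1 (Nat.card (Set.Iic x)) := by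
  have hsub : hx.toFinset.image (fun a => Nat.card (Set.Iic a)) ⊆
      Finset.Icc 1 (Nat.card (Set.Iic x)) := by
    simp only [Finset.image_subset_iff, Set.Finite.mem_toFinset]
    exact fun a hax => card_Iic_mem_Icc hx hax
  have hinj : Set.InjOn (fun a => Nat.card (Set.Iic a)) (Set.Iic x) := by
    intro a ha b hb hab
    by_contra hne
    rcases hchain ha hb hne with hle | hle
    · exact (card_Iic_lt_card_Iic (hx.subset (Set.Iic_subset_Iic.mpr hb))
        (hle.lt_of_ne hne)).ne hab
    · exact (card_Iic_lt_card_Iic (hx.subset (Set.Iic_subset_Iic.mpr ha))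
        (hle.lt_of_ne (Ne.symm hne))).ne' hab
  refine Finset.eq_of_subset_of_card_le hsub ?_
  rw [Nat.card_Icc, Finset.card_image_of_injOn (by simpa using hinj),
    ← Set.ncard_eq_toFinset_card _ hx, Nat.card_coe_set_eq]
  omega

theorem IsChainLengthFunction.eq_Icc_card_Iic {lstar : S → Finset ℕ}
    (hls : IsChainLengthFunction (fun a => Nat.card (Set.Iic a)) lstar)
    (hx : (Set.Iic x).Finite) (hchain : IsChain (· ≤ ·) (Set.Iic x)) :
    lstar x = Finset.Icc 1 (Nat.card (Set.Iic x)) := by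
  rw [← image_card_Iic_eq_Icc hx hchain]
  apply eq_of_subset_of_lexLE
  · obtain ⟨X, -, -, hXx, hX⟩ := (hls x).1
    rw [hX, image_card_Iic_eq_Icc hx hchain, Finset.image_subset_iff]
    exact fun a ha => card_Iic_mem_Icc hx (hXx a ha)
  · apply (hls x).2
    · simpa using hchain
    · simp
    · simp

end

/-- Let `S` be a poset such that `{x' | x' ≤ x}` is a finite chain for each `x`. Then
`λ(x) = card {x' | x' ≤ x}` is a length function, and the induced chain length
function `λ*` is equivalent to `λ`. -/
theorem card_le_isLengthFunction_and_equiv {S : Type*} [PartialOrder S]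
    (h : ∀ x : S, {x' : S | x' ≤ x}.Finite ∧ IsChain (· ≤ ·) {x' : S | x' ≤ x}) :
    IsLengthFunction (fun x : S => Nat.card {x' : S // x' ≤ x}) ∧
    (∀ lstar : S → Finset ℕ,
      IsChainLengthFunction (fun x : S => Nat.card {x' : S // x' ≤ x}) lstar →
      ∀ x y : S,
        (Nat.card {x' : S // x' ≤ x} ≤ Nat.card {x' : S // x' ≤ y} ↔
          lexLE (lstar x) (lstar y))) := by
  refine ⟨⟨fun x y => card_Iic_lt_card_Iic (h y).1, fun x y => le_total _ _,
    fun x => (h x).1.image _⟩, fun lstar hls x y => ?_⟩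
  rw [hls.eq_Icc_card_Iic (h x).1 (h x).2, hls.eq_Icc_card_Iic (h y).1 (h y).2]
  exact (lexLE_Icc_one_iff _ _).symm
end

section
/- Gabriel's main property: Let 𝒜 be an abelian length category with a length function ℓ, and let μ = ℓ* be the Gabriel-Roiter measure. If X, Y₁, …, Y_r are indecomposable objects and X is a subobject of Y = Y₁ ⊕ ⋯ ⊕ Y_r, then μ(X) ≤ max_i μ(Y_i); moreover, if μ(X) = max_i μ(Y_i), then X is a direct summand of Y. -/
set_option linter.unusedSectionVars false
set_option maxHeartbeats 1000000


open CategoryTheory CategoryTheory.Limits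

attribute [local instance] CategoryTheory.Limits.HasFiniteBiproducts.of_hasFiniteProducts

universe v u

variable (C : Type u) [Category.{v} C] [Abelian C]

/-- The abelian category is a length category: every object is artinian and noetherian,
i.e. its subobject lattice satisfies both chain conditions (equivalently, every object
has a finite composition series). -/
def IsLengthCategory : Prop :=
  ∀ X : C, WellFoundedLT (Subobject X) ∧ WellFoundedGT (Subobject X)

variable {C}

/-- `X` is (isomorphic to) a subobject of `Y`. -/
def SubOf (X Y : C) : Prop := ∃ f : X ⟶ Y, Mono f

/-- `X` is a proper subobject of `Y` (strict order on the poset of isoclasses of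
indecomposables ordered by the subobject relation). -/
def StrictSubOf (X Y : C) : Prop := SubOf X Y ∧ ¬ SubOf Y X

/-- `X` is indecomposable: nonzero, and any biproduct decomposition has a zero summand. -/
def Indec (X : C) : Prop :=
  ¬ IsZero X ∧ ∀ A B : C, Nonempty (X ≅ A ⊞ B) → IsZero A ∨ IsZero B

/-- A length function on an abelian length category: real-valued, nonnegative, zero
exactly on zero objects, and additive on short exact sequences. -/
def IsLengthFunctionCat (l : C → ℝ) : Prop :=
  (∀ X : C, 0 ≤ l X) ∧ (∀ X : C, l X = 0 ↔ IsZero X) ∧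
  (∀ Sc : ShortComplex C, Sc.ShortExact → l Sc.X₂ = l Sc.X₁ + l Sc.X₃)

/-- `μ` is the Gabriel-Roiter measure `ℓ*` with respect to `l`: for each
indecomposable `X`, `μ X ∈ Ch(ℝ)` is the lexicographic maximum of the sets
`{l X₁, …, l Xₙ}` over all chains `X₁ ⊂ X₂ ⊂ ⋯ ⊂ Xₙ = X` of indecomposable
subobjects of `X`. -/
def IsGRMeasure (l : C → ℝ) (μ : C → Finset ℝ) : Prop :=
  ∀ X : C, Indec X →
    (∃ (n : ℕ) (Z : Fin (n + 1) → C), (∀ i, Indec (Z i)) ∧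
      (∀ i j : Fin (n + 1), i < j → StrictSubOf (Z i) (Z j)) ∧ Z (Fin.last n) = X ∧
      μ X = Finset.univ.image fun i => l (Z i)) ∧
    (∀ (n : ℕ) (Z : Fin (n + 1) → C), (∀ i, Indec (Z i)) →
      (∀ i j : Fin (n + 1), i < j → StrictSubOf (Z i) (Z j)) → Z (Fin.last n) = X →
      lexLE (Finset.univ.image fun i => l (Z i)) (μ X))


namespace GRComb


variable {T : Type*} [LinearOrder T]
open Finset

theorem lex_refl (A : Finset T) : lexLE A A := Or.inl (by simp)

theorem lex_of_subset {A B : Finset T} (h : A ⊆ B) : lexLE A B :=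
  Or.inl (by simpa [Finset.sdiff_eq_empty_iff_subset])

theorem lex_total (A B : Finset T) : lexLE A B ∨ lexLE B A := by
  classical
  by_cases h1 : A \ B = ∅
  · exact Or.inl (Or.inl h1)
  by_cases h2 : B \ A = ∅
  · exact Or.inr (Or.inl h2)
  have h1' : (A \ B).Nonempty := Finset.nonempty_iff_ne_empty.2 h1
  have h2' : (B \ A).Nonempty := Finset.nonempty_iff_ne_empty.2 h2
  rcases le_total ((B \ A).min' h2') ((A \ B).min' h1') with h | h
  · exact Or.inl (Or.inr ⟨(B \ A).min' h2', Finset.min'_mem _ _,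
      fun a ha => h.trans (Finset.min'_le _ _ ha)⟩)
  · exact Or.inr (Or.inr ⟨(A \ B).min' h1', Finset.min'_mem _ _,
      fun a ha => h.trans (Finset.min'_le _ _ ha)⟩)

theorem lex_antisymm {A B : Finset T} (h1 : lexLE A B) (h2 : lexLE B A) : A = B := by
  classical
  rcases h1 with h1 | ⟨b, hb, hball⟩
  · rcases h2 with h2 | ⟨c, hc, hcall⟩
    · exact Finset.Subset.antisymm (Finset.sdiff_eq_empty_iff_subset.1 h1)
        (Finset.sdiff_eq_empty_iff_subset.1 h2)
    · simp [h1] at hc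
  · rcases h2 with h2 | ⟨c, hc, hcall⟩
    · simp [h2] at hb
    · have hbc : b ≤ c := hball c hc
      have hcb : c ≤ b := hcall b hb
      have : b = c := le_antisymm hbc hcb
      subst this
      simp only [Finset.mem_sdiff] at hb hc
      exact absurd hb.1 hc.2

theorem lex_trans {A B C : Finset T} (h1 : lexLE A B) (h2 : lexLE B C) : lexLE A C := by
  classical
  by_cases hAC : A \ C = ∅
  · exact Or.inl hAC
  rcases h1 with h1 | ⟨b, hb, hball⟩
  · -- A ⊆ B
    have hAB : A ⊆ B := Finset.sdiff_eq_empty_iff_subset.1 h1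
    rcases h2 with h2 | ⟨c, hc, hcall⟩
    · exact Or.inl (Finset.sdiff_eq_empty_iff_subset.2
        (hAB.trans (Finset.sdiff_eq_empty_iff_subset.1 h2)))
    · refine Or.inr ⟨c, ?_, ?_⟩
      · simp only [Finset.mem_sdiff] at hc ⊢
        exact ⟨hc.1, fun hcA => hc.2 (hAB hcA)⟩
      · intro a ha
        simp only [Finset.mem_sdiff] at ha
        exact hcall a (by simp [Finset.mem_sdiff, hAB ha.1, ha.2])
  · rcases h2 with h2 | ⟨c, hc, hcall⟩
    · -- B ⊆ C
      have hBC : B ⊆ C := Finset.sdiff_eq_empty_iff_subset.1 h2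
      refine Or.inr ⟨b, ?_, ?_⟩
      · simp only [Finset.mem_sdiff] at hb ⊢
        exact ⟨hBC hb.1, hb.2⟩
      · intro a ha
        simp only [Finset.mem_sdiff] at ha
        refine hball a (by
          simp only [Finset.mem_sdiff]
          exact ⟨ha.1, fun haB => ha.2 (hBC haB)⟩)
    · simp only [Finset.mem_sdiff] at hb hc
      rcases le_total b c with hbc | hcb
      · -- b ≤ c; witness b; first b ∈ C
        have hbC : b ∈ C := by
          by_contra hbC
          have : c ≤ b := hcall b (by simp [Finset.mem_sdiff, hb.1, hbC])
          have : b = c := le_antisymm hbc this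
          exact hc.2 (this ▸ hb.1)
        refine Or.inr ⟨b, by simp [Finset.mem_sdiff, hbC, hb.2], ?_⟩
        intro a ha
        simp only [Finset.mem_sdiff] at ha
        by_cases haB : a ∈ B
        · exact hbc.trans (hcall a (by simp [Finset.mem_sdiff, haB, ha.2]))
        · exact hball a (by simp [Finset.mem_sdiff, ha.1, haB])
      · -- c ≤ b; witness c
        have hcA : c ∉ A := by
          intro hcA
          have hbc : b ≤ c := hball c (by simp [Finset.mem_sdiff, hcA, hc.2])
          have : b = c := le_antisymm hbc hcb
          exact hc.2 (this ▸ hb.1)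
        refine Or.inr ⟨c, by simp [Finset.mem_sdiff, hc.1, hcA], ?_⟩
        intro a ha
        simp only [Finset.mem_sdiff] at ha
        by_cases haB : a ∈ B
        · exact hcall a (by simp [Finset.mem_sdiff, haB, ha.2])
        · exact hcb.trans (hball a (by simp [Finset.mem_sdiff, ha.1, haB]))


theorem lex_not_le_of_ssuperset {A B : Finset T} (h : A ⊆ B) (hne : A ≠ B) :
    ¬ lexLE B A := by
  classical
  rintro (h1 | ⟨b, hb, -⟩)
  · exact hne (Finset.Subset.antisymm h (Finset.sdiff_eq_empty_iff_subset.1 h1))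
  · simp only [Finset.mem_sdiff] at hb
    exact hb.2 (h hb.1)

theorem lex_diff_congr {A B A' B' : Finset T} (h1 : A \ B = A' \ B') (h2 : B \ A = B' \ A') :
    lexLE A B ↔ lexLE A' B' := by
  unfold lexLE
  rw [h1, h2]

theorem lex_insert_cancel {A B : Finset T} {c : T} (hA : c ∉ A) (hB : c ∉ B)
    (h : lexLE (insert c A) (insert c B)) : lexLE A B := by
  classical
  refine (lex_diff_congr ?_ ?_).1 h <;> ext x <;> simp only [Finset.mem_sdiff, Finset.mem_insert] <;>
    constructor <;> intro hx
  · refine ⟨?_, fun h' => hx.2 (Or.inr h')⟩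
    rcases hx.1 with rfl | h'
    · exact absurd (Or.inl rfl) hx.2
    · exact h'
  · exact ⟨Or.inr hx.1, fun h' => by
      rcases h' with rfl | h'
      · exact hA hx.1
      · exact hx.2 h'⟩
  · refine ⟨?_, fun h' => hx.2 (Or.inr h')⟩
    rcases hx.1 with rfl | h'
    · exact absurd (Or.inl rfl) hx.2
    · exact h'
  · exact ⟨Or.inr hx.1, fun h' => by
      rcases h' with rfl | h'
      · exact hB hx.1
      · exact hx.2 h'⟩

/-- "Comb1": if `S ≤ A ∪ B` where every element of `B` strictly dominates every
element of `S`, then `S ≤ A`. -/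
theorem lex_le_of_le_union {S A B : Finset T} (hS : lexLE S (A ∪ B))
    (hsmall : ∀ b ∈ B, ∀ s ∈ S, s < b) : lexLE S A := by
  classical
  by_cases hSA : S \ A = ∅
  · exact Or.inl hSA
  have hkey : ∀ x, x ∈ S \ A → x ∈ S \ (A ∪ B) := by
    intro x hx
    simp only [Finset.mem_sdiff, Finset.mem_union] at hx ⊢
    refine ⟨hx.1, ?_⟩
    rintro (h' | h')
    · exact hx.2 h'
    · exact absurd rfl (hsmall x h' x hx.1).ne'
  rcases hS with h1 | ⟨b, hb, hball⟩
  · obtain ⟨x, hx⟩ := Finset.nonempty_iff_ne_empty.2 hSA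
    simpa [h1] using hkey x hx
  · simp only [Finset.mem_sdiff, Finset.mem_union] at hb
    rcases hb.1 with hbA | hbB
    · refine Or.inr ⟨b, by simp [Finset.mem_sdiff, hbA, hb.2], ?_⟩
      intro a ha
      exact hball a (hkey a ha)
    · obtain ⟨x, hx⟩ := Finset.nonempty_iff_ne_empty.2 hSA
      have h1 : b ≤ x := hball x (hkey x hx)
      have h2 : x < b := hsmall b hbB x (Finset.mem_sdiff.1 hx).1
      exact absurd h1 (not_le.2 h2)

/-- The dichotomy: if `M = insert c A` (with `c` above everything in `A`),
`A ≤ β` but `¬ M ≤ β`, then `β ⊇ A`, `c ∉ β`, everything in `β \ A` exceeds `c`,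
and `β \ A` is nonempty provided `A ≠ β`. -/
theorem lex_dichotomy {A β : Finset T} {c : T} (hc : ∀ a ∈ A, a < c)
    (h2 : lexLE A β) (h1 : ¬ lexLE (insert c A) β) (hne : A ≠ β) :
    A ⊆ β ∧ c ∉ β ∧ (∀ b ∈ β \ A, c < b) ∧ (β \ A).Nonempty := by
  classical
  have hcA : c ∉ A := fun h => absurd rfl (hc c h).ne'
  have hsub : A ⊆ β := by
    rcases h2 with h2 | ⟨c0, hc0, hc0all⟩
    · exact Finset.sdiff_eq_empty_iff_subset.1 h2
    · by_cases hAβ : A \ β = ∅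
      · exact Finset.sdiff_eq_empty_iff_subset.1 hAβ
      · exfalso
        apply h1
        obtain ⟨x, hx⟩ := Finset.nonempty_iff_ne_empty.2 hAβ
        have hxc : x < c := hc x (Finset.mem_sdiff.1 hx).1
        have hc0x : c0 ≤ x := hc0all x hx
        have hc0c : c0 < c := lt_of_le_of_lt hc0x hxc
        simp only [Finset.mem_sdiff] at hc0
        refine Or.inr ⟨c0, by simp [Finset.mem_sdiff, Finset.mem_insert, hc0.1, hc0.2, hc0c.ne], ?_⟩
        intro a ha
        simp only [Finset.mem_sdiff, Finset.mem_insert] at ha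
        rcases ha.1 with rfl | haA
        · exact hc0c.le
        · exact hc0all a (by simp [Finset.mem_sdiff, haA, ha.2])
  have hcβ : c ∉ β := by
    intro hcβ
    apply h1
    apply lex_of_subset
    intro x hx
    rcases Finset.mem_insert.1 hx with rfl | hxA
    · exact hcβ
    · exact hsub hxA
  have hgt : ∀ b ∈ β \ A, c < b := by
    intro b hb
    simp only [Finset.mem_sdiff] at hb
    by_contra hbc
    have hbc' : b < c := lt_of_le_of_ne (not_lt.1 hbc) (fun h => hcβ (h ▸ hb.1))
    apply h1
    refine Or.inr ⟨b, ?_, ?_⟩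
    · simp only [Finset.mem_sdiff, Finset.mem_insert]
      exact ⟨hb.1, fun h => by
        rcases h with rfl | h
        · exact absurd rfl hbc'.ne
        · exact hb.2 h⟩
    · intro a ha
      simp only [Finset.mem_sdiff, Finset.mem_insert] at ha
      rcases ha.1 with rfl | haA
      · exact hbc'.le
      · exact absurd (hsub haA) ha.2
  refine ⟨hsub, hcβ, hgt, ?_⟩
  rw [Finset.sdiff_nonempty]
  intro hβA
  exact hne (Finset.Subset.antisymm hsub hβA)

theorem exists_lex_max {ι : Type*} [Nonempty ι] [Fintype ι] (f : ι → Finset T) :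
    ∃ k, ∀ i, lexLE (f i) (f k) := by
  classical
  obtain ⟨s, hs⟩ : ∃ s : Finset ι, s = Finset.univ := ⟨_, rfl⟩
  have : ∀ (s : Finset ι), s.Nonempty → ∃ k ∈ s, ∀ i ∈ s, lexLE (f i) (f k) := by
    intro s
    induction s using Finset.induction with
    | empty => intro h; exact absurd h (by simp)
    | @insert a s ha ih =>
      intro _
      by_cases hs' : s.Nonempty
      · obtain ⟨k, hk, hkall⟩ := ih hs'
        rcases lex_total (f a) (f k) with h | h
        · exact ⟨k, Finset.mem_insert_of_mem hk, fun i hi => by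
            rcases Finset.mem_insert.1 hi with rfl | hi
            · exact h
            · exact hkall i hi⟩
        · exact ⟨a, Finset.mem_insert_self a s, fun i hi => by
            rcases Finset.mem_insert.1 hi with rfl | hi
            · exact lex_refl _
            · exact lex_trans (hkall i hi) h⟩
      · rw [Finset.not_nonempty_iff_eq_empty] at hs'
        subst hs'
        exact ⟨a, Finset.mem_insert_self a _, fun i hi => by
          rcases Finset.mem_insert.1 hi with rfl | hi
          · exact lex_refl _
          · simp at hi⟩
  obtain ⟨k, _, hk⟩ := this Finset.univ (Finset.univ_nonempty)
  exact ⟨k, fun i => hk i (Finset.mem_univ i)⟩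

end GRComb

namespace GRMain
open GRComb

variable {C : Type u} [Category.{v} C] [Abelian C]

theorem subOf_refl (X : C) : SubOf X X := ⟨𝟙 X, inferInstance⟩

theorem subOf_trans {X Y Z : C} (h1 : SubOf X Y) (h2 : SubOf Y Z) : SubOf X Z := by
  obtain ⟨f, hf⟩ := h1; obtain ⟨g, hg⟩ := h2
  exact ⟨f ≫ g, mono_comp f g⟩

theorem subOf_of_iso {X Y : C} (e : X ≅ Y) : SubOf X Y := ⟨e.hom, inferInstance⟩

section Len
variable {l : C → ℝ}

theorem len_nonneg (hl : IsLengthFunctionCat l) (X : C) : 0 ≤ l X := hl.1 X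

theorem len_zero_iff (hl : IsLengthFunctionCat l) {X : C} : l X = 0 ↔ IsZero X := hl.2.1 X

theorem len_pos (hl : IsLengthFunctionCat l) {X : C} (h : ¬ IsZero X) : 0 < l X :=
  lt_of_le_of_ne (hl.1 X) (fun h' => h ((hl.2.1 X).1 h'.symm))

theorem len_add (hl : IsLengthFunctionCat l) {A B : C} (f : A ⟶ B) [Mono f] : l B = l A + l (cokernel f) := by
  have hex : (ShortComplex.mk f (cokernel.π f) (cokernel.condition f)).Exact :=
    ShortComplex.exact_of_g_is_cokernel _ (cokernelIsCokernel f)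
  have hse : (ShortComplex.mk f (cokernel.π f) (cokernel.condition f)).ShortExact :=
    { exact := hex }
  exact hl.2.2 _ hse

theorem len_mono_le (hl : IsLengthFunctionCat l) {A B : C} (f : A ⟶ B) [Mono f] : l A ≤ l B := by
  have := len_add hl f
  have h0 := hl.1 (cokernel f)
  linarith

theorem len_iso (hl : IsLengthFunctionCat l) {A B : C} (e : A ≅ B) : l A = l B :=
  le_antisymm (len_mono_le hl e.hom) (len_mono_le hl e.inv)

theorem isIso_of_mono_of_len_eq (hl : IsLengthFunctionCat l) {A B : C} (f : A ⟶ B) [Mono f] (h : l A = l B) :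
    IsIso f := by
  have hc : l (cokernel f) = 0 := by have := len_add hl f; linarith
  have : Epi f := Preadditive.epi_of_isZero_cokernel f ((hl.2.1 _).1 hc)
  exact isIso_of_mono_of_epi f

theorem len_lt_of_mono_not_iso (hl : IsLengthFunctionCat l) {A B : C} (f : A ⟶ B) [Mono f] (h : ¬ IsIso f) :
    l A < l B := by
  rcases lt_or_eq_of_le (len_mono_le hl f) with h' | h'
  · exact h'
  · exact absurd (isIso_of_mono_of_len_eq hl f h') h

theorem subOf_len_le (hl : IsLengthFunctionCat l) {A B : C} (h : SubOf A B) : l A ≤ l B := by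
  obtain ⟨f, hf⟩ := h; exact len_mono_le hl f

theorem isZero_of_mono_zero {A B : C} (f : A ⟶ B) [Mono f] (h : f = 0) : IsZero A := by
  rw [IsZero.iff_id_eq_zero]
  have : 𝟙 A ≫ f = 0 ≫ f := by simp [h]
  exact (cancel_mono f).1 this

/-- From a mono into an object of equal length and a mono back, lengths coincide,
so the mono is iso. -/
theorem isIso_of_mono_of_subOf (hl : IsLengthFunctionCat l) {A B : C} (f : A ⟶ B) [Mono f] (h : SubOf B A) :
    IsIso f :=
  isIso_of_mono_of_len_eq hl f (le_antisymm (len_mono_le hl f) (subOf_len_le hl h))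

theorem len_coimage_lt (hl : IsLengthFunctionCat l) {A B : C} (q : A ⟶ B) (h : ¬ Mono q) (hA : ¬ IsZero A) :
    l (Abelian.coimage q) < l A := by
  have hk : ¬ IsZero (kernel q) := fun hz => h (Preadditive.mono_of_isZero_kernel q hz)
  have := len_add hl (kernel.ι q)
  have := len_pos hl hk
  -- cokernel (kernel.ι q) = Abelian.coimage q definitionally
  simpa [Abelian.coimage] using by linarith
end Len

end GRMain

namespace GRMain2
open GRMain GRComb

variable {C : Type u} [Category.{v} C] [Abelian C]

theorem isZero_biproduct_empty {J : Type} [Fintype J] [IsEmpty J] (f : J → C) :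
    IsZero (⨁ f) := by
  rw [IsZero.iff_id_eq_zero]
  apply biproduct.hom_ext
  intro j
  exact (IsEmpty.false j).elim

/-- Iso of an object with the biproduct of the single-element family. -/
noncomputable def biproductSingleIso (W : C) : W ≅ ⨁ (fun _ : Fin 1 => W) where
  hom := biproduct.lift fun _ => 𝟙 W
  inv := biproduct.π _ 0
  hom_inv_id := by simp
  inv_hom_id := by
    apply biproduct.hom_ext
    intro j
    have : j = 0 := Subsingleton.elim _ _
    subst this
    simp

/-- `(⨁ f) ⊞ (⨁ g)` is the biproduct over the sum type. -/
noncomputable def biprodSumIso {J K : Type} [Fintype J] [Fintype K] (f : J → C) (g : K → C) :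
    ((⨁ f) ⊞ (⨁ g)) ≅ ⨁ (Sum.elim f g) where
  hom := biproduct.lift fun p =>
    Sum.rec (fun j => biprod.fst ≫ biproduct.π f j) (fun k => biprod.snd ≫ biproduct.π g k) p
  inv := biprod.lift (biproduct.lift fun j => biproduct.π _ (Sum.inl j))
    (biproduct.lift fun k => biproduct.π _ (Sum.inr k))
  hom_inv_id := by
    apply biprod.hom_ext <;> apply biproduct.hom_ext <;> intro j <;>
      simp [biprod.lift_fst, biprod.lift_snd] <;> erw [biproduct.lift_π, biproduct.lift_π]
  inv_hom_id := by
    apply biproduct.hom_ext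
    intro p
    rcases p with j | k
    · rw [Category.assoc, biproduct.lift_π, Category.id_comp]
      exact (biprod.lift_fst_assoc _ _ _).trans (biproduct.lift_π _ _)
    · rw [Category.assoc, biproduct.lift_π, Category.id_comp]
      exact (biprod.lift_snd_assoc _ _ _).trans (biproduct.lift_π _ _)

/-- Biproduct of biproducts is the biproduct over the sigma type. -/
noncomputable def biproductSigmaIso {J : Type} [Fintype J] {κ : J → Type} [∀ j, Fintype (κ j)]
    (Z : ∀ j, κ j → C) :
    (⨁ fun j => ⨁ (Z j)) ≅ ⨁ (fun p : Σ j, κ j => Z p.1 p.2) where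
  hom := biproduct.lift fun p => biproduct.π _ p.1 ≫ biproduct.π _ p.2
  inv := biproduct.lift fun j => biproduct.lift fun k => biproduct.π _ (⟨j, k⟩ : Σ j, κ j)
  hom_inv_id := by
    apply biproduct.hom_ext
    intro j
    apply biproduct.hom_ext
    intro k
    simp
  inv_hom_id := by
    apply biproduct.hom_ext
    intro p
    rcases p with ⟨j, k⟩
    simp

theorem subOf_summand {J : Type} [Fintype J] (f : J → C) (j : J) {W : C} (e : W ≅ ⨁ f) :
    SubOf (f j) W :=
  ⟨biproduct.ι f j ≫ e.inv, mono_comp _ _⟩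

/-- A proper nonzero subobject admitting a retraction contradicts indecomposability. -/
theorem no_retraction {X' X : C} (ι : X' ⟶ X) [Mono ι] (r : X ⟶ X') (hr : ι ≫ r = 𝟙 X')
    (hX : Indec X) (hX' : ¬ IsZero X') (hns : ¬ SubOf X X') : False := by
  have hκw : (𝟙 X - r ≫ ι) ≫ r = 0 := by
    simp only [Preadditive.sub_comp, Category.id_comp, Category.assoc]
    rw [show ι ≫ r = 𝟙 X' from hr]
    simp
  set κ : X ⟶ kernel r := kernel.lift r (𝟙 X - r ≫ ι) hκw with hκ
  have hκι : κ ≫ kernel.ι r = 𝟙 X - r ≫ ι := kernel.lift_ι _ _ _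
  have hικ : ι ≫ κ = 0 := by
    rw [← cancel_mono (kernel.ι r), Category.assoc, hκι, zero_comp]
    simp only [Preadditive.comp_sub, Category.comp_id]
    rw [← Category.assoc, hr, Category.id_comp, sub_self]
  have hkκ : kernel.ι r ≫ κ = 𝟙 (kernel r) := by
    rw [← cancel_mono (kernel.ι r), Category.assoc, hκι, Category.id_comp]
    simp only [Preadditive.comp_sub, Category.comp_id]
    rw [← Category.assoc, kernel.condition, zero_comp, sub_zero]
  have hiso : X ≅ X' ⊞ kernel r := by
    refine ⟨biprod.lift r κ, biprod.desc ι (kernel.ι r), ?_, ?_⟩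
    · rw [biprod.lift_desc, hκι]
      abel
    · apply biprod.hom_ext'
      · apply biprod.hom_ext
        · simp only [Category.assoc, biprod.inl_desc_assoc, biprod.lift_fst, hr,
            Category.comp_id, biprod.inl_fst]
        · simp only [Category.assoc, biprod.inl_desc_assoc, biprod.lift_snd, hικ,
            Category.comp_id, biprod.inl_snd]
      · apply biprod.hom_ext
        · simp only [Category.assoc, biprod.inr_desc_assoc, biprod.lift_fst,
            kernel.condition, Category.comp_id, biprod.inr_fst]
        · simp only [Category.assoc, biprod.inr_desc_assoc, biprod.lift_snd, hkκ,
            Category.comp_id, biprod.inr_snd]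
  rcases hX.2 _ _ ⟨hiso⟩ with hz | hz
  · exact hX' hz
  · have hκ0 : κ ≫ kernel.ι r = 0 := by
      have h1 : κ = 0 := hz.eq_zero_of_tgt κ
      rw [h1, zero_comp]
    have hri : r ≫ ι = 𝟙 X := by
      rw [hκι] at hκ0
      exact (sub_eq_zero.1 hκ0).symm
    have : Epi ι := epi_of_epi_fac hri
    have : IsIso ι := isIso_of_mono_of_epi ι
    exact hns ⟨inv ι, inferInstance⟩

end GRMain2

namespace GRMain3
open GRMain GRMain2 GRComb

variable {C : Type u} [Category.{v} C] [Abelian C]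

theorem decomp (hC : IsLengthCategory C) {l : C → ℝ} (hl : IsLengthFunctionCat l) (W : C) :
    ∃ (m : ℕ) (V : Fin m → C), (∀ t, Indec (V t)) ∧ Nonempty (W ≅ ⨁ V) := by
  have main : ∀ s : Subobject W, ∀ A : C, (A ≅ (s : C)) →
      ∃ (m : ℕ) (V : Fin m → C), (∀ t, Indec (V t)) ∧ Nonempty (A ≅ ⨁ V) := by
    have hwf : WellFoundedLT (Subobject W) := (hC W).1
    intro s
    induction s using WellFoundedLT.induction with
    | ind s IH =>
      intro A isoA
      by_cases hz : IsZero A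
      · exact ⟨0, fun t => t.elim0, fun t => t.elim0, ⟨hz.iso (isZero_biproduct_empty _)⟩⟩
      by_cases hind : Indec A
      · exact ⟨1, fun _ => A, fun _ => hind, ⟨biproductSingleIso A⟩⟩
      have hdec : ∃ A₁ B₁ : C, Nonempty (A ≅ A₁ ⊞ B₁) ∧ ¬ IsZero A₁ ∧ ¬ IsZero B₁ := by
        rw [Indec] at hind
        push_neg at hind
        obtain ⟨A₁, B₁, h1, h2⟩ := hind hz
        exact ⟨A₁, B₁, h1, h2.1, h2.2⟩
      obtain ⟨A₁, B₁, ⟨e⟩, hA₁, hB₁⟩ := hdec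
      have hlen : l A = l A₁ + l B₁ := by
        have h1 : l (A₁ ⊞ B₁) = l A₁ + l (cokernel (biprod.inl : A₁ ⟶ A₁ ⊞ B₁)) :=
          len_add hl _
        have h2 : l (cokernel (biprod.inl : A₁ ⟶ A₁ ⊞ B₁)) = l B₁ :=
          len_iso hl (cokernelBiprodInlIso (X := A₁) (Y := B₁))
        rw [len_iso hl e, h1, h2]
      have hlen' : l A = l B₁ + l A₁ := by
        have h1 : l (A₁ ⊞ B₁) = l B₁ + l (cokernel (biprod.inr : B₁ ⟶ A₁ ⊞ B₁)) :=
          len_add hl _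
        have h2 : l (cokernel (biprod.inr : B₁ ⟶ A₁ ⊞ B₁)) = l A₁ :=
          len_iso hl (cokernelBiprodInrIso (X := A₁) (Y := B₁))
        rw [len_iso hl e, h1, h2]
      -- recurse on A₁
      have recur : ∀ (A₁' : C) (f : A₁' ⟶ A) (_ : Mono f) (_ : l A₁' < l A),
          ∃ (m : ℕ) (V : Fin m → C), (∀ t, Indec (V t)) ∧ Nonempty (A₁' ≅ ⨁ V) := by
        intro A₁' f hf hlt
        haveI := hf
        set g : A₁' ⟶ (s : C) := f ≫ isoA.hom with hg
        haveI : Mono g := mono_comp _ _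
        set t₁ : Subobject W := Subobject.mk (g ≫ s.arrow) with ht₁
        haveI : Mono (g ≫ s.arrow) := mono_comp _ _
        have hle : t₁ ≤ s := by
          have := Subobject.mk_le_mk_of_comm (f₁ := g ≫ s.arrow) (f₂ := s.arrow) g rfl
          rwa [Subobject.mk_arrow] at this
        have hne : t₁ ≠ s := by
          intro hEq
          have e1 : (t₁ : C) ≅ A₁' := Subobject.underlyingIso (g ≫ s.arrow)
          have e2 : (t₁ : C) ≅ (s : C) := Subobject.isoOfEq _ _ hEq
          have : l A₁' = l A := by
            rw [← len_iso hl e1, len_iso hl e2, ← len_iso hl isoA]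
          exact absurd this hlt.ne
        exact IH t₁ (lt_of_le_of_ne hle hne) A₁' (Subobject.underlyingIso (g ≫ s.arrow)).symm
      have hAlt : l A₁ < l A := by
        have := len_pos hl hB₁; linarith
      have hBlt : l B₁ < l A := by
        have := len_pos hl hA₁; linarith
      obtain ⟨mA, VA, hVA, ⟨eA⟩⟩ := recur A₁ (biprod.inl ≫ e.inv) (mono_comp _ _) hAlt
      obtain ⟨mB, VB, hVB, ⟨eB⟩⟩ := recur B₁ (biprod.inr ≫ e.inv) (mono_comp _ _) hBlt
      refine ⟨mA + mB, Sum.elim VA VB ∘ finSumFinEquiv.symm, ?_, ?_⟩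
      · intro t
        rcases h : finSumFinEquiv.symm t with j | k
        · simpa [h] using hVA j
        · simpa [h] using hVB k
      · refine ⟨e ≪≫ biprod.mapIso eA eB ≪≫ biprodSumIso VA VB ≪≫
          biproduct.whiskerEquiv finSumFinEquiv ?_⟩
        intro j
        exact eqToIso (congrArg (Sum.elim VA VB) (finSumFinEquiv.symm_apply_apply j))
  obtain ⟨m, V, h1, h2⟩ := main ⊤ W (asIso ((⊤ : Subobject W).arrow)).symm
  exact ⟨m, V, h1, h2⟩

end GRMain3

namespace GRMain4
open GRMain GRMain2 GRMain3 GRComb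

variable {C : Type u} [Category.{v} C] [Abelian C]

theorem image_fin_succ {n : ℕ} (f : Fin (n + 1) → ℝ) :
    Finset.univ.image f
      = insert (f (Fin.last n)) (Finset.univ.image fun i : Fin n => f i.castSucc) := by
  ext x
  simp only [Finset.mem_image, Finset.mem_insert, Finset.mem_univ, true_and]
  constructor
  · rintro ⟨i, rfl⟩
    induction i using Fin.lastCases with
    | last => exact Or.inl rfl
    | cast j => exact Or.inr ⟨j, rfl⟩
  · rintro (rfl | ⟨j, rfl⟩)
    exacts [⟨Fin.last n, rfl⟩, ⟨j.castSucc, rfl⟩]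

theorem chain_subOf {n : ℕ} {Z : Fin (n + 1) → C} {X : C}
    (h2 : ∀ i j : Fin (n + 1), i < j → StrictSubOf (Z i) (Z j))
    (h3 : Z (Fin.last n) = X) (i : Fin (n + 1)) : SubOf (Z i) X := by
  subst h3
  by_cases h : i = Fin.last n
  · subst h; exact subOf_refl _
  · exact (h2 i (Fin.last n) (lt_of_le_of_ne (Fin.le_last i) (fun h' => h (Fin.ext (by
      simpa using congrArg Fin.val h'))))).1

theorem snoc_chain_strict {n : ℕ} {Z : Fin n → C} {B : C}
    (h2 : ∀ i j : Fin n, i < j → StrictSubOf (Z i) (Z j))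
    (hstep : ∀ i, StrictSubOf (Z i) B) :
    ∀ i j : Fin (n + 1), i < j →
      StrictSubOf ((Fin.snoc Z B : Fin (n + 1) → C) i) ((Fin.snoc Z B : Fin (n + 1) → C) j) := by
  intro i j hij
  induction j using Fin.lastCases with
  | last =>
    induction i using Fin.lastCases with
    | last => exact absurd hij (lt_irrefl _)
    | cast i' =>
      rw [Fin.snoc_castSucc, Fin.snoc_last]
      exact hstep i'
  | cast j' =>
    induction i using Fin.lastCases with
    | last => exact absurd (hij.trans (Fin.castSucc_lt_last j')) (lt_irrefl _)
    | cast i' =>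
      rw [Fin.snoc_castSucc, Fin.snoc_castSucc]
      exact h2 i' j' (by exact_mod_cast hij)

theorem snoc_image {n : ℕ} (l : C → ℝ) (Z : Fin n → C) (B : C) :
    (Finset.univ.image fun i => l ((Fin.snoc Z B : Fin (n + 1) → C) i))
      = insert (l B) (Finset.univ.image fun i => l (Z i)) := by
  rw [image_fin_succ]
  simp [Fin.snoc_castSucc, Fin.snoc_last]

variable {l : C → ℝ} {μ : C → Finset ℝ}

theorem mu_le_self (hl : IsLengthFunctionCat l) (hμ : IsGRMeasure l μ) {X : C} (hX : Indec X) :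
    l X ∈ μ X ∧ ∀ x ∈ μ X, x ≤ l X := by
  obtain ⟨⟨n, Z, h1, h2, h3, hval⟩, -⟩ := hμ X hX
  constructor
  · rw [hval]
    exact Finset.mem_image.2 ⟨Fin.last n, Finset.mem_univ _, by rw [h3]⟩
  · intro x hx
    rw [hval] at hx
    obtain ⟨i, -, rfl⟩ := Finset.mem_image.1 hx
    exact subOf_len_le hl (chain_subOf h2 h3 i)

theorem mu_mono (hl : IsLengthFunctionCat l) (hμ : IsGRMeasure l μ) {A B : C}
    (hA : Indec A) (hB : Indec B) (hsub : SubOf A B) : lexLE (μ A) (μ B) := by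
  obtain ⟨⟨n, Z, h1, h2, h3, hval⟩, -⟩ := hμ A hA
  by_cases hBA : SubOf B A
  · -- replace the last entry by B
    obtain ⟨f, hf⟩ := hsub
    haveI := hf
    have hiso : IsIso f := isIso_of_mono_of_subOf hl f hBA
    set Z' : Fin (n + 1) → C := (Fin.snoc (fun i : Fin n => Z i.castSucc) B : Fin (n + 1) → C) with hZ'
    have h2' : ∀ i j : Fin n, i < j → StrictSubOf (Z i.castSucc) (Z j.castSucc) :=
      fun i j hij => h2 _ _ (by exact_mod_cast hij)
    have hstep : ∀ i : Fin n, StrictSubOf (Z i.castSucc) B := by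
      intro i
      constructor
      · exact subOf_trans (chain_subOf h2 h3 i.castSucc) ⟨f, hf⟩
      · intro h
        have hAZ : SubOf A (Z i.castSucc) := subOf_trans ⟨f, hf⟩ h
        have := (h2 i.castSucc (Fin.last n) (Fin.castSucc_lt_last i)).2
        rw [h3] at this
        exact this hAZ
    have hstrict' := snoc_chain_strict h2' hstep
    have hind' : ∀ i, Indec (Z' i) := by
      intro i
      induction i using Fin.lastCases with
      | last => rw [hZ', Fin.snoc_last]; exact hB
      | cast i' => rw [hZ', Fin.snoc_castSucc]; exact h1 _
    have hlast' : Z' (Fin.last n) = B := by rw [hZ', Fin.snoc_last]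
    have hle := (hμ B hB).2 n Z' hind' hstrict' hlast'
    have hvals : (Finset.univ.image fun i => l (Z' i)) = μ A := by
      rw [hZ', snoc_image, hval, image_fin_succ (fun i => l (Z i)), h3,
        len_iso hl (asIso f)]
    rwa [hvals] at hle
  · have hstep : ∀ i, StrictSubOf (Z i) B := by
      intro i
      constructor
      · exact subOf_trans (chain_subOf h2 h3 i) hsub
      · exact fun h => hBA (subOf_trans h (chain_subOf h2 h3 i))
    have hstrict' := snoc_chain_strict h2 hstep
    have hind' : ∀ i : Fin (n + 2), Indec ((Fin.snoc Z B : Fin (n + 2) → C) i) := by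
      intro i
      induction i using Fin.lastCases with
      | last => rw [Fin.snoc_last]; exact hB
      | cast i' => rw [Fin.snoc_castSucc]; exact h1 _
    have hle := (hμ B hB).2 (n + 1) (Fin.snoc Z B) hind' hstrict' (Fin.snoc_last _ _)
    rw [snoc_image, ← hval] at hle
    exact lex_trans (lex_of_subset (Finset.subset_insert _ _)) hle

theorem len_lt_of_strict (hl : IsLengthFunctionCat l) {A B : C} (h : StrictSubOf A B) :
    l A < l B := by
  obtain ⟨⟨f, hf⟩, hns⟩ := h
  haveI := hf
  refine len_lt_of_mono_not_iso hl f (fun hiso => hns ⟨inv f, inferInstance⟩)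

theorem mu_ne_of_strict (hl : IsLengthFunctionCat l) (hμ : IsGRMeasure l μ) {A B : C}
    (hA : Indec A) (hB : Indec B) (h : StrictSubOf A B) : μ A ≠ μ B := by
  intro heq
  obtain ⟨⟨n, Z, h1, h2, h3, hval⟩, -⟩ := hμ A hA
  have hstep : ∀ i, StrictSubOf (Z i) B := by
    intro i
    constructor
    · exact subOf_trans (chain_subOf h2 h3 i) h.1
    · exact fun h' => h.2 (subOf_trans h' (chain_subOf h2 h3 i))
  have hind' : ∀ i : Fin (n + 2), Indec ((Fin.snoc Z B : Fin (n + 2) → C) i) := by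
    intro i
    induction i using Fin.lastCases with
    | last => rw [Fin.snoc_last]; exact hB
    | cast i' => rw [Fin.snoc_castSucc]; exact h1 _
  have hle := (hμ B hB).2 (n + 1) (Fin.snoc Z B) hind' (snoc_chain_strict h2 hstep)
    (Fin.snoc_last _ _)
  rw [snoc_image, ← hval, ← heq] at hle
  have hlB : l B ∉ μ A := by
    intro hmem
    have := (mu_le_self hl hμ hA).2 _ hmem
    have := len_lt_of_strict hl h
    linarith
  exact lex_not_le_of_ssuperset (Finset.subset_insert _ _)
    (fun hEq => hlB (by rw [hEq]; exact Finset.mem_insert_self _ _)) hle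

theorem mono_mu_eq_iso (hl : IsLengthFunctionCat l) (hμ : IsGRMeasure l μ) {A B : C}
    (hA : Indec A) (hB : Indec B) (f : A ⟶ B) (hf : Mono f) (heq : μ A = μ B) : IsIso f := by
  haveI := hf
  by_cases hBA : SubOf B A
  · exact isIso_of_mono_of_subOf hl f hBA
  · exact absurd heq (mu_ne_of_strict hl hμ hA hB ⟨⟨f, hf⟩, hBA⟩)

end GRMain4

namespace GRMain5
open GRMain GRMain2 GRMain3 GRMain4 GRComb

variable {C : Type u} [Category.{v} C] [Abelian C]
variable {l : C → ℝ} {μ : C → Finset ℝ}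

theorem two_chain_contra (hl : IsLengthFunctionCat l) (hμ : IsGRMeasure l μ)
    {V X : C} (hV : Indec V) (hX : Indec X) (hsub : SubOf V X) (hlen : l V < l X)
    (hval : μ X = {l X}) : False := by
  have hstep : ∀ i : Fin 1, StrictSubOf ((fun _ : Fin 1 => V) i) X := by
    intro i
    exact ⟨hsub, fun h => absurd (subOf_len_le hl h) (not_le.2 hlen)⟩
  have hstrict := snoc_chain_strict (Z := fun _ : Fin 1 => V) (B := X) (by
    intro i j hij
    have : i = j := Subsingleton.elim i j
    exact absurd (this ▸ hij) (lt_irrefl _)) hstep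
  have hind : ∀ i : Fin 2, Indec ((Fin.snoc (fun _ : Fin 1 => V) X : Fin 2 → C) i) := by
    intro i
    induction i using Fin.lastCases with
    | last => rw [Fin.snoc_last]; exact hX
    | cast i' => rw [Fin.snoc_castSucc]; exact hV
  have hle := (hμ X hX).2 1 (Fin.snoc (fun _ : Fin 1 => V) X) hind hstrict (Fin.snoc_last _ _)
  rw [snoc_image] at hle
  have himg : (Finset.univ.image fun _ : Fin 1 => l V) = {l V} := by
    simp
  rw [himg, hval] at hle
  -- hle : lexLE (insert (l X) {l V}) {l X}, contradiction since l V < l X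
  rcases hle with h | ⟨b, hb, -⟩
  · have : l V ∈ insert (l X) {l V} \ ({l X} : Finset ℝ) := by
      simp [hlen.ne]
    rw [h] at this
    simp at this
  · simp only [Finset.mem_sdiff, Finset.mem_singleton, Finset.mem_insert] at hb
    exact hb.2 (Or.inl hb.1)

theorem pred_or_simple (hC : IsLengthCategory C) (hl : IsLengthFunctionCat l)
    (hμ : IsGRMeasure l μ) {X : C} (hX : Indec X) :
    (∀ (A : C) (f : A ⟶ X), Mono f → ¬ IsZero A → IsIso f) ∨
    (∃ X', Indec X' ∧ StrictSubOf X' X ∧ μ X = insert (l X) (μ X') ∧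
      ∀ x ∈ μ X', x < l X) := by
  obtain ⟨⟨n, Z, h1, h2, h3, hval⟩, -⟩ := hμ X hX
  cases n with
  | zero =>
    left
    intro A f hm hnz
    by_contra hni
    haveI := hm
    have hlen : l A < l X := len_lt_of_mono_not_iso hl f hni
    obtain ⟨m, V, hVind, ⟨eV⟩⟩ := decomp hC hl A
    have hm0 : Nonempty (Fin m) := by
      rcases Nat.eq_zero_or_pos m with rfl | hpos
      · exact absurd (isZero_biproduct_empty V) (fun hz => hnz (hz.of_iso eV))
      · exact ⟨⟨0, hpos⟩⟩
    obtain ⟨t⟩ := hm0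
    have hsub : SubOf (V t) X := subOf_trans (subOf_summand V t eV) ⟨f, hm⟩
    have hlenV : l (V t) < l X :=
      lt_of_le_of_lt (subOf_len_le hl (subOf_summand V t eV)) hlen
    have hvalX : μ X = {l X} := by
      rw [hval]
      have : ∀ i : Fin 1, Z i = X := by
        intro i
        have : i = Fin.last 0 := Subsingleton.elim _ _
        rw [this, h3]
      simp [this]
    exact two_chain_contra hl hμ (hVind t) hX hsub hlenV hvalX
  | succ m =>
    right
    set X' : C := Z (Fin.last m).castSucc with hX'def
    have hstrictX' : StrictSubOf X' X := by
      have := h2 (Fin.last m).castSucc (Fin.last (m + 1)) (Fin.castSucc_lt_last _)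
      rwa [h3] at this
    have hX'ind : Indec X' := h1 _
    -- truncated chain attains μ X'
    set T : Fin (m + 1) → C := fun i => Z i.castSucc with hTdef
    have hT2 : ∀ i j : Fin (m + 1), i < j → StrictSubOf (T i) (T j) :=
      fun i j hij => h2 _ _ (by exact_mod_cast hij)
    have hTle := (hμ X' hX'ind).2 m T (fun i => h1 _) hT2 rfl
    -- appended chain: attaining chain of X' followed by X
    obtain ⟨⟨n', W, hW1, hW2, hW3, hWval⟩, -⟩ := hμ X' hX'ind
    have hstep : ∀ i, StrictSubOf (W i) X := by
      intro i
      constructor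
      · exact subOf_trans (chain_subOf hW2 hW3 i) hstrictX'.1
      · exact fun h => hstrictX'.2 (subOf_trans h (chain_subOf hW2 hW3 i))
    have hind' : ∀ i : Fin (n' + 2), Indec ((Fin.snoc W X : Fin (n' + 2) → C) i) := by
      intro i
      induction i using Fin.lastCases with
      | last => rw [Fin.snoc_last]; exact hX
      | cast i' => rw [Fin.snoc_castSucc]; exact hW1 _
    have happ := (hμ X hX).2 (n' + 1) (Fin.snoc W X) hind'
      (snoc_chain_strict hW2 hstep) (Fin.snoc_last _ _)
    rw [snoc_image, ← hWval] at happ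
    -- μ X = insert (l X) (image of T)
    have hval' : μ X = insert (l X) (Finset.univ.image fun i => l (T i)) := by
      rw [hval, image_fin_succ (fun i => l (Z i)), h3]
    have hlX'lt : l X' < l X := len_lt_of_strict hl hstrictX'
    have hTbound : ∀ x ∈ (Finset.univ.image fun i => l (T i)), x < l X := by
      intro x hx
      obtain ⟨i, -, rfl⟩ := Finset.mem_image.1 hx
      exact lt_of_le_of_lt (subOf_len_le hl (chain_subOf hT2 rfl i)) hlX'lt
    have hmubound : ∀ x ∈ μ X', x < l X := by
      intro x hx
      exact lt_of_le_of_lt ((mu_le_self hl hμ hX'ind).2 x hx) hlX'lt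
    -- conclude image of T = μ X'
    have hTeq : (Finset.univ.image fun i => l (T i)) = μ X' := by
      apply lex_antisymm hTle
      rw [hval'] at happ
      refine lex_insert_cancel ?_ ?_ happ
      · exact fun h => absurd (hmubound _ h) (lt_irrefl _)
      · exact fun h => absurd (hTbound _ h) (lt_irrefl _)
    refine ⟨X', hX'ind, hstrictX', ?_, hmubound⟩
    rw [hval', hTeq]

end GRMain5

namespace GRMain6
open GRMain GRMain2 GRMain3 GRMain4 GRMain5 GRComb

variable {C : Type u} [Category.{v} C] [Abelian C]
variable {l : C → ℝ} {μ : C → Finset ℝ}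

/-- The statement we prove by induction on the subobject relation. -/
def MainProp (l : C → ℝ) (μ : C → Finset ℝ) (X : C) : Prop :=
  ∀ (m : ℕ) (Y : Fin (m + 1) → C), (∀ i, Indec (Y i)) → ∀ u : X ⟶ ⨁ Y, Mono u →
    ∀ k : Fin (m + 1), (∀ i, lexLE (μ (Y i)) (μ (Y k))) →
      lexLE (μ X) (μ (Y k)) ∧ (μ X = μ (Y k) → ∃ j, IsIso (u ≫ biproduct.π Y j))

theorem bullets (hC : IsLengthCategory C) (hl : IsLengthFunctionCat l)
    (hμ : IsGRMeasure l μ) {X X' : C} (hX : Indec X) (hX' : Indec X')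
    (hstrict : StrictSubOf X' X) (ι : X' ⟶ X) (hι : Mono ι)
    {m : ℕ} {Y : Fin (m + 1) → C} (hY : ∀ i, Indec (Y i)) (u : X ⟶ ⨁ Y) (hu : Mono u)
    (k : Fin (m + 1)) (hk : ∀ i, lexLE (μ (Y i)) (μ (Y k)))
    (IH : MainProp l μ X')
    (Bset : Finset ℝ) (hβ : μ (Y k) = μ X' ∪ Bset) (hB : ∀ b ∈ Bset, l X ≤ b)
    (hpnm : ∀ i, ¬ Mono (u ≫ biproduct.π Y i)) : False := by
  haveI := hι
  haveI := hu
  set p : ∀ i, X ⟶ Y i := fun i => u ≫ biproduct.π Y i with hp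
  set q : ∀ i, X' ⟶ Y i := fun i => ι ≫ p i with hq
  have hlX' : l X' < l X := len_lt_of_strict hl hstrict
  by_cases hqm : ∃ i, Mono (q i)
  · -- bullet 1
    obtain ⟨i, hqi⟩ := hqm
    have hUlt : l (Abelian.coimage (p i)) < l X := len_coimage_lt hl (p i) (hpnm i) hX.1
    set v : X' ⟶ Abelian.coimage (p i) := ι ≫ Abelian.coimage.π (p i) with hv
    have hvfac : v ≫ Abelian.factorThruCoimage (p i) = q i := by
      rw [hv, Category.assoc, Abelian.coimage.fac]
    haveI : Mono (v ≫ Abelian.factorThruCoimage (p i)) := by rw [hvfac]; exact hqi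
    haveI : Mono v := mono_of_mono v (Abelian.factorThruCoimage (p i))
    have hUnz : ¬ IsZero (Abelian.coimage (p i)) := by
      intro hz
      exact hX'.1 (isZero_of_mono_zero v (hz.eq_zero_of_tgt v))
    obtain ⟨mV, V, hVind, ⟨eV⟩⟩ := decomp hC hl (Abelian.coimage (p i))
    cases mV with
    | zero => exact hUnz ((isZero_biproduct_empty V).of_iso eV)
    | succ m' =>
      set w : X' ⟶ ⨁ V := v ≫ eV.hom with hw
      haveI : Mono w := mono_comp _ _
      obtain ⟨k', hk'⟩ := exists_lex_max (fun t : Fin (m' + 1) => μ (V t))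
      have hsubV : ∀ t, SubOf (V t) (Y i) := fun t =>
        subOf_trans (subOf_summand V t eV) ⟨Abelian.factorThruCoimage (p i), inferInstance⟩
      have hVle : lexLE (μ (V k')) (μ (Y k)) :=
        lex_trans (mu_mono hl hμ (hVind k') (hY i) (hsubV k')) (hk i)
      have hsmall : ∀ b ∈ Bset, ∀ s ∈ μ (V k'), s < b := by
        intro b hb s hs
        have h1 : s ≤ l (V k') := (mu_le_self hl hμ (hVind k')).2 s hs
        have h2 : l (V k') ≤ l (Abelian.coimage (p i)) :=
          subOf_len_le hl (subOf_summand V k' eV)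
        have h3 := hB b hb
        linarith
      have hComb : lexLE (μ (V k')) (μ X') :=
        lex_le_of_le_union (hβ ▸ hVle) hsmall
      obtain ⟨hA2, hC2⟩ := IH m' V hVind w inferInstance k' hk'
      obtain ⟨j, hj⟩ := hC2 (lex_antisymm hA2 hComb)
      haveI := hj
      have hretr : ι ≫ (Abelian.coimage.π (p i) ≫ eV.hom ≫ biproduct.π V j ≫
          inv (w ≫ biproduct.π V j)) = 𝟙 X' := by
        have : ι ≫ Abelian.coimage.π (p i) ≫ eV.hom ≫ biproduct.π V j
            = w ≫ biproduct.π V j := by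
          rw [hw, hv]
          simp only [Category.assoc]
        rw [show ι ≫ (Abelian.coimage.π (p i) ≫ eV.hom ≫ biproduct.π V j ≫
            inv (w ≫ biproduct.π V j))
            = (ι ≫ Abelian.coimage.π (p i) ≫ eV.hom ≫ biproduct.π V j) ≫
              inv (w ≫ biproduct.π V j) by simp only [Category.assoc], this,
          IsIso.hom_inv_id]
      exact no_retraction ι _ hretr hX hX'.1 hstrict.2
  · -- bullet 2
    push_neg at hqm
    set U : Fin (m + 1) → C := fun i => Abelian.coimage (q i) with hU
    have hUlt : ∀ i, l (U i) < l X' := fun i => len_coimage_lt hl (q i) (hqm i) hX'.1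
    have hdec := fun i => decomp hC hl (U i)
    choose mv V hVind hEiso using hdec
    have eU : ∀ i, U i ≅ ⨁ (V i) := fun i => (hEiso i).some
    set w₀ : X' ⟶ ⨁ U := biproduct.lift (fun i => Abelian.coimage.π (q i)) with hw₀
    have hw₀fac : w₀ ≫ biproduct.map (fun i => Abelian.factorThruCoimage (q i)) = ι ≫ u := by
      apply biproduct.hom_ext
      intro i'
      rw [Category.assoc, biproduct.map_π, ← Category.assoc, hw₀, biproduct.lift_π,
        Abelian.coimage.fac, Category.assoc]
    haveI : Mono (w₀ ≫ biproduct.map (fun i => Abelian.factorThruCoimage (q i))) := by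
      rw [hw₀fac]; exact mono_comp _ _
    haveI : Mono w₀ := mono_of_mono w₀ (biproduct.map (fun i => Abelian.factorThruCoimage (q i)))
    set Φ : (⨁ U) ≅ ⨁ (fun i => ⨁ (V i)) := biproduct.mapIso eU with hΦ
    set Ψ := biproductSigmaIso V with hΨ
    set G : (Σ i : Fin (m + 1), Fin (mv i)) → C := fun pr => V pr.1 pr.2 with hG
    by_cases hT : Nonempty (Σ i : Fin (m + 1), Fin (mv i))
    · set eT := Fintype.equivFin (Σ i : Fin (m + 1), Fin (mv i)) with heT
      have hcard : 0 < Fintype.card (Σ i : Fin (m + 1), Fin (mv i)) := Fintype.card_pos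
      obtain ⟨c', hc'⟩ : ∃ c', Fintype.card (Σ i : Fin (m + 1), Fin (mv i)) = c' + 1 :=
        ⟨_ - 1, (Nat.succ_pred_eq_of_pos hcard).symm⟩
      set G' : Fin (c' + 1) → C := fun t => G (eT.symm (Fin.cast hc'.symm t)) with hG'
      have hG'ind : ∀ t, Indec (G' t) := fun t => hVind _ _
      set Θ : (⨁ G) ≅ ⨁ G' := biproduct.whiskerEquiv
        (eT.trans (finCongr hc')) (fun pr => eqToIso (by
          rw [hG']
          congr 1
          simp)) with hΘ
      set w : X' ⟶ ⨁ G' := w₀ ≫ Φ.hom ≫ Ψ.hom ≫ Θ.hom with hwdef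
      haveI : Mono w := by
        rw [hwdef]
        exact mono_comp _ _
      obtain ⟨k', hk'⟩ := exists_lex_max (fun t : Fin (c' + 1) => μ (G' t))
      have hsubG : ∀ pr : (Σ i : Fin (m + 1), Fin (mv i)), SubOf (G pr) (Y pr.1) := by
        intro pr
        exact subOf_trans (subOf_summand (V pr.1) pr.2 (eU pr.1))
          ⟨Abelian.factorThruCoimage (q pr.1), inferInstance⟩
      have hlenG : ∀ pr : (Σ i : Fin (m + 1), Fin (mv i)), l (G pr) < l X' := by
        intro pr
        have h1 : l (G pr) ≤ l (U pr.1) := subOf_len_le hl (subOf_summand (V pr.1) pr.2 (eU pr.1))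
        have h2 := hUlt pr.1
        linarith
      have hVle : lexLE (μ (G' k')) (μ (Y k)) := by
        have := mu_mono hl hμ (hG'ind k') (hY _) (hsubG (eT.symm (Fin.cast hc'.symm k')))
        exact lex_trans this (hk _)
      have hsmall : ∀ b ∈ Bset, ∀ s ∈ μ (G' k'), s < b := by
        intro b hb s hs
        have h1 : s ≤ l (G' k') := (mu_le_self hl hμ (hG'ind k')).2 s hs
        have h2 := hlenG (eT.symm (Fin.cast hc'.symm k'))
        have h3 := hB b hb
        have h4 : l (G' k') = l (G (eT.symm (Fin.cast hc'.symm k'))) := rfl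
        linarith [h4 ▸ h1]
      have hComb : lexLE (μ (G' k')) (μ X') := lex_le_of_le_union (hβ ▸ hVle) hsmall
      obtain ⟨hA2, -⟩ := IH c' G' hG'ind w inferInstance k' hk'
      have heq : μ X' = μ (G' k') := lex_antisymm hA2 hComb
      have hmem : l X' ∈ μ (G' k') := heq ▸ (mu_le_self hl hμ hX').1
      have h1 : l X' ≤ l (G' k') := (mu_le_self hl hμ (hG'ind k')).2 _ hmem
      have h2 := hlenG (eT.symm (Fin.cast hc'.symm k'))
      have h3 : l (G' k') = l (G (eT.symm (Fin.cast hc'.symm k'))) := rfl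
      linarith [h3 ▸ h1]
    · have hempty : IsEmpty (Σ i : Fin (m + 1), Fin (mv i)) := not_nonempty_iff.1 hT
      have hz : IsZero (⨁ G) := @isZero_biproduct_empty C _ _ _ _ hempty G
      set w : X' ⟶ ⨁ G := w₀ ≫ Φ.hom ≫ Ψ.hom with hwdef
      haveI : Mono w := by rw [hwdef]; exact mono_comp _ _
      exact hX'.1 (isZero_of_mono_zero w (hz.eq_zero_of_tgt w))

end GRMain6

namespace GRMain7
open GRMain GRMain2 GRMain3 GRMain4 GRMain5 GRMain6 GRComb

variable {C : Type u} [Category.{v} C] [Abelian C]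
variable {l : C → ℝ} {μ : C → Finset ℝ}

theorem P_step (hC : IsLengthCategory C) (hl : IsLengthFunctionCat l)
    (hμ : IsGRMeasure l μ) (X : C) (hX : Indec X)
    (IH : ∀ X', Indec X' → StrictSubOf X' X → MainProp l μ X') : MainProp l μ X := by
  intro m Y hY u hu k hk
  haveI := hu
  rcases pred_or_simple hC hl hμ hX with hsimp | ⟨X', hX', hstrict, hvalX, hbound⟩
  · -- every nonzero subobject of X is all of X
    have hexists : ∃ i, Mono (u ≫ biproduct.π Y i) := by
      by_contra hno
      push_neg at hno
      have hzero : ∀ i, u ≫ biproduct.π Y i = 0 := by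
        intro i
        have hk0 : ¬ IsZero (kernel (u ≫ biproduct.π Y i)) := fun hz =>
          hno i (Preadditive.mono_of_isZero_kernel _ hz)
        have hiso := hsimp _ (kernel.ι (u ≫ biproduct.π Y i)) inferInstance hk0
        haveI := hiso
        rw [← cancel_epi (kernel.ι (u ≫ biproduct.π Y i)), kernel.condition, comp_zero]
      have hu0 : u = 0 := by
        apply biproduct.hom_ext
        intro i
        rw [zero_comp]
        exact hzero i
      exact hX.1 (isZero_of_mono_zero u hu0)
    obtain ⟨i, hpi⟩ := hexists
    haveI := hpi
    have hle : lexLE (μ X) (μ (Y i)) := mu_mono hl hμ hX (hY i) ⟨_, hpi⟩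
    refine ⟨lex_trans hle (hk i), ?_⟩
    intro heq
    have ha : lexLE (μ (Y i)) (μ X) := by rw [heq]; exact hk i
    have heq2 : μ (Y i) = μ X := lex_antisymm ha hle
    exact ⟨i, mono_mu_eq_iso hl hμ hX (hY i) _ hpi heq2.symm⟩
  · obtain ⟨ι, hι⟩ := hstrict.1
    haveI := hι
    have IH' : MainProp l μ X' := IH X' hX' hstrict
    haveI : Mono (ι ≫ u) := mono_comp _ _
    have hA : lexLE (μ X) (μ (Y k)) := by
      by_contra hbad
      obtain ⟨hA', hC'⟩ := IH' m Y hY (ι ≫ u) inferInstance k hk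
      have hne : μ X' ≠ μ (Y k) := by
        intro heq
        obtain ⟨j, hj⟩ := hC' heq
        haveI := hj
        have hretr : ι ≫ (u ≫ biproduct.π Y j ≫ inv ((ι ≫ u) ≫ biproduct.π Y j)) = 𝟙 X' := by
          rw [show ι ≫ (u ≫ biproduct.π Y j ≫ inv ((ι ≫ u) ≫ biproduct.π Y j))
              = ((ι ≫ u) ≫ biproduct.π Y j) ≫ inv ((ι ≫ u) ≫ biproduct.π Y j) by
            simp only [Category.assoc], IsIso.hom_inv_id]
        exact no_retraction ι _ hretr hX hX'.1 hstrict.2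
      have hbad' : ¬ lexLE (insert (l X) (μ X')) (μ (Y k)) := by
        rw [← hvalX]; exact hbad
      obtain ⟨hsub, hcnot, hgt, hne'⟩ := lex_dichotomy hbound hA' hbad' hne
      have hβ : μ (Y k) = μ X' ∪ (μ (Y k) \ μ X') := (Finset.union_sdiff_of_subset hsub).symm
      have hB : ∀ b ∈ μ (Y k) \ μ X', l X ≤ b := fun b hb => (hgt b hb).le
      have hpnm : ∀ i, ¬ Mono (u ≫ biproduct.π Y i) := by
        intro i hpi
        haveI := hpi
        exact hbad (lex_trans (mu_mono hl hμ hX (hY i) ⟨_, hpi⟩) (hk i))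
      exact bullets hC hl hμ hX hX' hstrict ι hι hY u hu k hk IH' _ hβ hB hpnm
    refine ⟨hA, ?_⟩
    intro heq
    by_cases hex : ∃ i, Mono (u ≫ biproduct.π Y i)
    · obtain ⟨i, hpi⟩ := hex
      haveI := hpi
      have h1 : lexLE (μ X) (μ (Y i)) := mu_mono hl hμ hX (hY i) ⟨_, hpi⟩
      have ha : lexLE (μ (Y i)) (μ X) := by rw [heq]; exact hk i
      have heq2 : μ (Y i) = μ X := lex_antisymm ha h1
      exact ⟨i, mono_mu_eq_iso hl hμ hX (hY i) _ hpi heq2.symm⟩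
    · exfalso
      push_neg at hex
      have hβ : μ (Y k) = μ X' ∪ {l X} := by
        rw [← heq, hvalX, Finset.insert_eq, Finset.union_comm]
      have hB : ∀ b ∈ ({l X} : Finset ℝ), l X ≤ b := by
        intro b hb
        rw [Finset.mem_singleton] at hb
        exact hb.ge
      exact bullets hC hl hμ hX hX' hstrict ι hι hY u hu k hk IH' _ hβ hB hex

theorem main_all (hC : IsLengthCategory C) (hl : IsLengthFunctionCat l)
    (hμ : IsGRMeasure l μ) (X : C) (hX : Indec X) : MainProp l μ X := by
  have key : ∀ s : Subobject X, ∀ A : C, (A ≅ (s : C)) → Indec A → MainProp l μ A := by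
    have hwf : WellFoundedLT (Subobject X) := (hC X).1
    intro s
    induction s using WellFoundedLT.induction with
    | ind s IHs =>
      intro A isoA hA
      apply P_step hC hl hμ A hA
      intro X' hX' hstrict
      obtain ⟨f, hf⟩ := hstrict.1
      haveI := hf
      set g : X' ⟶ (s : C) := f ≫ isoA.hom with hg
      haveI : Mono g := mono_comp _ _
      haveI : Mono (g ≫ s.arrow) := mono_comp _ _
      set t : Subobject X := Subobject.mk (g ≫ s.arrow) with ht
      have hle : t ≤ s := by
        have := Subobject.mk_le_mk_of_comm (f₁ := g ≫ s.arrow) (f₂ := s.arrow) g rfl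
        rwa [Subobject.mk_arrow] at this
      have hne : t ≠ s := by
        intro hEq
        have e1 : (t : C) ≅ X' := Subobject.underlyingIso (g ≫ s.arrow)
        have e2 : (t : C) ≅ (s : C) := Subobject.isoOfEq _ _ hEq
        have : SubOf A X' := ⟨isoA.hom ≫ e2.symm.hom ≫ e1.hom, mono_comp _ _⟩
        exact hstrict.2 this
      exact IHs t (lt_of_le_of_ne hle hne) X' (Subobject.underlyingIso (g ≫ s.arrow)).symm hX'
  exact key ⊤ X (asIso ((⊤ : Subobject X).arrow)).symm hX

end GRMain7

/-- Gabriel's main property: if `X ⊆ Y = Y₁ ⊕ ⋯ ⊕ Y_r` with `X` and all `Yᵢ`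
indecomposable, then `μ(X) ≤ max μ(Yᵢ)`; and if `μ(X) = max μ(Yᵢ)`, then `X` is a
direct summand of `Y`. -/
theorem gr_main_property {C : Type u} [Category.{v} C] [Abelian C]
    (hC : IsLengthCategory C) (l : C → ℝ) (hl : IsLengthFunctionCat l)
    (μ : C → Finset ℝ) (hμ : IsGRMeasure l μ)
    (r : ℕ) (X : C) (Y : Fin (r + 1) → C) (hX : Indec X) (hY : ∀ i, Indec (Y i))
    (φ : X ⟶ ⨁ Y) (hφ : Mono φ) :
    (∃ k, (∀ i, lexLE (μ (Y i)) (μ (Y k))) ∧ lexLE (μ X) (μ (Y k))) ∧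
    ((∃ k, (∀ i, lexLE (μ (Y i)) (μ (Y k))) ∧ μ X = μ (Y k)) →
      ∃ (s : X ⟶ ⨁ Y) (p : (⨁ Y) ⟶ X), s ≫ p = 𝟙 X) := by
  have hmain := GRMain7.main_all hC hl hμ X hX
  obtain ⟨k, hk⟩ := GRComb.exists_lex_max (fun i : Fin (r + 1) => μ (Y i))
  obtain ⟨hA, hCpart⟩ := hmain r Y hY φ hφ k hk
  constructor
  · exact ⟨k, hk, hA⟩
  · rintro ⟨k₂, hk₂, heq₂⟩
    have hkk : μ (Y k₂) = μ (Y k) := GRComb.lex_antisymm (hk k₂) (hk₂ k)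
    obtain ⟨j, hj⟩ := hCpart (by rw [heq₂, hkk])
    haveI := hj
    refine ⟨φ, biproduct.π Y j ≫ inv (φ ≫ biproduct.π Y j), ?_⟩
    rw [show φ ≫ biproduct.π Y j ≫ inv (φ ≫ biproduct.π Y j)
        = (φ ≫ biproduct.π Y j) ≫ inv (φ ≫ biproduct.π Y j) by simp only [Category.assoc],
      IsIso.hom_inv_id]
end

section
/- Let 𝒜 be an abelian length category with length function ℓ, and let X, Y be indecomposable objects such that for every simple subobject X' ⊆ X and every simple subobject Y' ⊆ Y one has ℓ(X') < ℓ(Y'). Then ℓ*(X) > ℓ*(Y), where ℓ* is the Gabriel-Roiter measure with respect to ℓ. -/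
open CategoryTheory CategoryTheory.Limits

universe v u

variable (C : Type u) [Category.{v} C] [Abelian C]

variable {C}

/-!
A simple subobject `S ⊆ X` gives, through the chain `S ⊂ X` (or through `X` itself when
`X ⊆ S`), a value `m ∈ ℓ*(X)` with `m ≤ ℓ(S)`. Every value of `ℓ*(Y)` is the length of a
nonzero subobject `Z ⊆ Y`, and `Z` contains a simple `T ⊆ Y`, so it is at least
`ℓ(T) > ℓ(S) ≥ m`. A chain having an element below all of another chain is
lexicographically larger.
-/

section Lex

variable {T : Type*} [PartialOrder T] [DecidableEq T]

lemma lexLE.exists_le_of_mem {A B : Finset T} (h : lexLE A B) {a : T} (ha : a ∈ A) :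
    ∃ b ∈ B, b ≤ a := by
  by_cases haB : a ∈ B
  · exact ⟨a, haB, le_rfl⟩
  have haAB : a ∈ A \ B := Finset.mem_sdiff.2 ⟨ha, haB⟩
  rcases h with hempty | ⟨b, hb, hba⟩
  · simp [hempty] at haAB
  · exact ⟨b, (Finset.mem_sdiff.1 hb).1, hba a haAB⟩

lemma lexLT_of_mem_of_forall_lt {A B : Finset T} {m : T} (hm : m ∈ B)
    (hlt : ∀ a ∈ A, m < a) : lexLT A B := by
  have hmA : m ∉ A := fun h => lt_irrefl m (hlt m h)
  refine ⟨Or.inr ⟨m, Finset.mem_sdiff.2 ⟨hm, hmA⟩,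
    fun a ha => (hlt a (Finset.mem_sdiff.1 ha).1).le⟩, fun h => ?_⟩
  obtain ⟨b, hb, hbm⟩ := h.exists_le_of_mem hm
  exact (hlt b hb).not_ge hbm

end Lex

lemma SubOf.refl {D : Type*} [Category D] (X : D) : SubOf X X := ⟨𝟙 X, inferInstance⟩

lemma SubOf.trans {D : Type*} [Category D] {X Y Z : D} (hXY : SubOf X Y) (hYZ : SubOf Y Z) :
    SubOf X Z := by
  obtain ⟨f, _⟩ := hXY
  obtain ⟨g, _⟩ := hYZ
  exact ⟨f ≫ g, mono_comp f g⟩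

lemma indec_of_simple (S : C) [Simple S] : Indec S :=
  have hS := indecomposable_of_simple S
  ⟨hS.1, fun A B ⟨e⟩ => hS.2 A B e⟩

lemma exists_simple_subOf {X : C} (hX : WellFoundedLT (Subobject X)) (hX0 : ¬IsZero X) :
    ∃ S : C, Simple S ∧ SubOf S X :=
  have : IsArtinianObject X := ⟨hX⟩
  have ⟨S, hS⟩ := exists_simple_subobject hX0
  ⟨S, hS, S.arrow, inferInstance⟩

lemma IsLengthFunctionCat.le_of_subOf {l : C → ℝ} (hl : IsLengthFunctionCat l) {A B : C}
    (hAB : SubOf A B) : l A ≤ l B := by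
  obtain ⟨f, _⟩ := hAB
  let Sc := ShortComplex.mk f (cokernel.π f) (cokernel.condition f)
  have hSc : Sc.ShortExact :=
    { exact := Sc.exact_of_g_is_cokernel (cokernelIsCokernel f) }
  have hadd : l B = l A + l (cokernel f) := hl.2.2 Sc hSc
  linarith [hl.1 (cokernel f)]

section GRMeasure

variable {l : C → ℝ} {μ : C → Finset ℝ}

lemma IsGRMeasure.length_mem (hμ : IsGRMeasure l μ) {X : C} (hX : Indec X) : l X ∈ μ X := by
  obtain ⟨n, Z, -, -, hZX, hμX⟩ := (hμ X hX).1
  exact hμX ▸ Finset.mem_image.2 ⟨Fin.last n, Finset.mem_univ _, by rw [hZX]⟩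

lemma IsGRMeasure.exists_subOf_of_mem (hμ : IsGRMeasure l μ) {Y : C} (hY : Indec Y) {y : ℝ}
    (hy : y ∈ μ Y) : ∃ Z : C, Indec Z ∧ SubOf Z Y ∧ l Z = y := by
  obtain ⟨n, Z, hZ, hchain, hZY, hμY⟩ := (hμ Y hY).1
  obtain ⟨j, -, rfl⟩ := Finset.mem_image.1 (hμY ▸ hy)
  refine ⟨Z j, hZ j, ?_, rfl⟩
  rcases (Fin.le_last j).eq_or_lt with rfl | hj
  · exact hZY ▸ SubOf.refl _
  · exact hZY ▸ (hchain j _ hj).1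

lemma IsGRMeasure.exists_le_of_strictSubOf (hμ : IsGRMeasure l μ) {S X : C} (hS : Indec S)
    (hX : Indec X) (hSX : StrictSubOf S X) : ∃ m ∈ μ X, m ≤ l S := by
  have hchain : ∀ i j : Fin 2, i < j → StrictSubOf (![S, X] i) (![S, X] j) := by
    intro i j hij
    fin_cases i <;> fin_cases j <;> first | exact hSX | exact absurd hij (by decide)
  have hlex := (hμ X hX).2 1 ![S, X] (fun i => by fin_cases i <;> assumption) hchain rfl
  exact hlex.exists_le_of_mem (Finset.mem_image.2 ⟨0, Finset.mem_univ _, rfl⟩)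

end GRMeasure

/-- If every simple subobject of `X` has strictly smaller length than every simple
subobject of `Y`, then `ℓ*(X) > ℓ*(Y)`. -/
theorem gr_socle_comparison {C : Type u} [Category.{v} C] [Abelian C]
    (hC : IsLengthCategory C) (l : C → ℝ) (hl : IsLengthFunctionCat l)
    (μ : C → Finset ℝ) (hμ : IsGRMeasure l μ)
    (X Y : C) (hX : Indec X) (hY : Indec Y)
    (h : ∀ X' Y' : C, Simple X' → SubOf X' X → Simple Y' → SubOf Y' Y → l X' < l Y') :
    lexLT (μ Y) (μ X) := by
  obtain ⟨S, hS, hSX⟩ := exists_simple_subOf (hC X).1 hX.1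
  obtain ⟨m, hmX, hmS⟩ : ∃ m ∈ μ X, m ≤ l S := by
    by_cases hXS : SubOf X S
    · exact ⟨l X, hμ.length_mem hX, hl.le_of_subOf hXS⟩
    · exact hμ.exists_le_of_strictSubOf (indec_of_simple S) hX ⟨hSX, hXS⟩
  refine lexLT_of_mem_of_forall_lt hmX fun y hy => ?_
  obtain ⟨Z, hZ, hZY, rfl⟩ := hμ.exists_subOf_of_mem hY hy
  obtain ⟨T, hT, hTZ⟩ := exists_simple_subOf (hC Z).1 hZ.1
  calc m ≤ l S := hmS
    _ < l T := h S T hS hSX hT (hTZ.trans hZY)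
    _ ≤ l Z := hl.le_of_subOf hTZ
end
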